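/- arXiv:2411.12944 — 6 statements merged into one kernel-verified Lean document; each statement's English description precedes it below -/
import Mathlib

section
/- Under Assumption 1, suppose Y^(j) is integrable and E_jk[π_j(Z)] > 0. Define the naive estimator Ȳ_jk = (Σ_{i∈I_jk} 1{A_i=j} Y_i)/(Σ_{i∈I_jk} 1{A_i=j}) (defined arbitrarily when the denominator is 0). Then as n → ∞, Ȳ_jk converges in probability to E_jk[π_j(Z) E(Y^(j)|Z)] / E_jk[π_j(Z)], i.e., the π_j-weighted average of the conditional mean of Y^(j) given Z over the ECE event, divided by the ECE-conditional mean of π_j(Z). -/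
/-!
Numerator and denominator, divided by `n`, are empirical means of i.i.d. integrable variables, so
by the strong law the ratio converges almost surely, hence in probability, to
`E[1{ECE, A = j} Y^(j)] / P(ECE, A = j)`. The event ECE is `σ(Z)`-measurable, so both expectations
may be computed after conditioning on `Z`: conditional independence of `A` and `Y^(j)` given `Z`
turns `1{A = j} Y^(j)` into `π_j(Z) E[Y^(j) | Z]` and `1{A = j}` into `π_j(Z)`. Finally the
normalisation by `P(ECE)` in `E_jk` cancels in the ratio.
-/

open MeasureTheory ProbabilityTheory Filter Set Topology

theorem ProbabilityTheory.CondIndepFun.condExp_mul_ae_eq {Ω : Type*} {m mΩ : MeasurableSpace Ω}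
    [StandardBorelSpace Ω] {μ : Measure Ω} [IsFiniteMeasure μ] {hm : m ≤ mΩ} {f g : Ω → ℝ}
    (h : CondIndepFun m hm f g μ) (hf : Measurable f) (hg : Measurable g)
    (hfi : Integrable f μ) (hgi : Integrable g μ) (hfgi : Integrable (f * g) μ) :
    μ[f * g|m] =ᵐ[μ] μ[f|m] * μ[g|m] := by
  -- Conditional independence is independence under almost every measure `condExpKernel μ m ω`.
  have hker := (condIndepFun_iff_map_prod_eq_prod_map_map hf hg).1 h
  have hpt : ∀ᵐ ω ∂μ, IndepFun f g (condExpKernel μ m ω) := by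
    refine ae_of_ae_trim hm ?_
    filter_upwards [hker] with ω hω
    rw [Kernel.map_apply _ (hf.prodMk hg), Kernel.prod_apply, Kernel.map_apply _ hf,
      Kernel.map_apply _ hg] at hω
    exact (indepFun_iff_map_prod_eq_prod_map_map hf.aemeasurable hg.aemeasurable).2 hω
  filter_upwards [hpt, condExp_ae_eq_integral_condExpKernel hm hfgi,
    condExp_ae_eq_integral_condExpKernel hm hfi,
    condExp_ae_eq_integral_condExpKernel hm hgi] with ω hω hfg hf' hg'
  rw [Pi.mul_apply, hfg, hf', hg']
  exact hω.integral_mul_eq_mul_integral hf.aestronglyMeasurable hg.aestronglyMeasurable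

theorem setIntegral_eq_of_condExp_ae_eq {Ω : Type*} {m mΩ : MeasurableSpace Ω} {μ : Measure Ω}
    (hm : m ≤ mΩ) [SigmaFinite (μ.trim hm)] {f p : Ω → ℝ} (hf : Integrable f μ)
    (h : μ[f|m] =ᵐ[μ] p) {E : Set Ω} (hE : MeasurableSet[m] E) :
    ∫ x in E, f x ∂μ = ∫ x in E, p x ∂μ := by
  rw [← setIntegral_condExp hm hf hE]
  exact setIntegral_congr_ae (hm E hE) (h.mono fun x hx _ => hx)

theorem condExp_indicator_preimage_ae_eq_mul {Ω β : Type*} {m mΩ : MeasurableSpace Ω}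
    [MeasurableSpace β] [StandardBorelSpace Ω] {μ : Measure Ω} [IsFiniteMeasure μ]
    {hm : m ≤ mΩ} {A : Ω → β} {g : Ω → ℝ} (h : CondIndepFun m hm A g μ)
    (hA : Measurable A) (hg : Measurable g) (hgi : Integrable g μ)
    {s : Set β} (hs : MeasurableSet s) :
    μ[(A ⁻¹' s).indicator g|m] =ᵐ[μ] μ[(A ⁻¹' s).indicator 1|m] * μ[g|m] := by
  have hAs : MeasurableSet (A ⁻¹' s) := hA hs
  have hind : (A ⁻¹' s).indicator g = (A ⁻¹' s).indicator 1 * g :=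
    funext fun x => by by_cases hx : x ∈ A ⁻¹' s <;> simp [hx]
  rw [hind]
  exact (h.comp (measurable_const.indicator hs) measurable_id).condExp_mul_ae_eq
    (measurable_const.indicator hAs) hg ((integrable_const 1).indicator hAs) hgi
    (hind ▸ hgi.indicator hAs)

theorem setIntegral_indicator_eq_setIntegral_mul_condExp {Ω β : Type*}
    {m mΩ : MeasurableSpace Ω} [MeasurableSpace β] [StandardBorelSpace Ω] {μ : Measure Ω}
    [IsFiniteMeasure μ] {hm : m ≤ mΩ} {A : Ω → β} {g p : Ω → ℝ} (h : CondIndepFun m hm A g μ)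
    (hA : Measurable A) (hg : Measurable g) (hgi : Integrable g μ) {s : Set β}
    (hs : MeasurableSet s) (hp : μ[(A ⁻¹' s).indicator 1|m] =ᵐ[μ] p) {E : Set Ω}
    (hE : MeasurableSet[m] E) :
    ∫ x in E, (A ⁻¹' s).indicator g x ∂μ = ∫ x in E, p x * μ[g|m] x ∂μ := by
  refine setIntegral_eq_of_condExp_ae_eq hm (hgi.indicator (hA hs)) ?_ hE
  filter_upwards [condExp_indicator_preimage_ae_eq_mul h hA hg hgi hs, hp] with x hx hpx
  rw [hx, Pi.mul_apply, hpx]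

theorem tendsto_div_of_tendsto_div_natCast {u v : ℕ → ℝ} {a b : ℝ}
    (hu : Tendsto (fun n => u n / n) atTop (𝓝 a)) (hv : Tendsto (fun n => v n / n) atTop (𝓝 b))
    (hb : b ≠ 0) : Tendsto (fun n => u n / v n) atTop (𝓝 (a / b)) := by
  refine (hu.div hv hb).congr' ?_
  filter_upwards [eventually_ne_atTop 0] with n hn
  simp only [Pi.div_apply, div_div_div_cancel_right₀ (Nat.cast_ne_zero.2 hn : (n : ℝ) ≠ 0)]

theorem tendstoInMeasure_sum_div_sum {Ω E : Type*} [MeasurableSpace Ω] [MeasurableSpace E]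
    {μ : Measure Ω} [IsFiniteMeasure μ] {X : ℕ → Ω → E} {X₀ : Ω → E}
    (hindep : Pairwise fun i j => IndepFun (X i) (X j) μ)
    (hident : ∀ i, IdentDistrib (X i) X₀ μ μ) {φ ψ : E → ℝ} (hφ : Measurable φ)
    (hψ : Measurable ψ) (hφi : Integrable (φ ∘ X₀) μ) (hψi : Integrable (ψ ∘ X₀) μ)
    (hψ₀ : μ[ψ ∘ X₀] ≠ 0) :
    TendstoInMeasure μ
      (fun n ω => (∑ i ∈ Finset.range n, φ (X i ω)) / ∑ i ∈ Finset.range n, ψ (X i ω))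
      atTop (fun _ => μ[φ ∘ X₀] / μ[ψ ∘ X₀]) := by
  have slln : ∀ {χ : E → ℝ}, Measurable χ → Integrable (χ ∘ X₀) μ →
      ∀ᵐ ω ∂μ, Tendsto (fun n : ℕ => (∑ i ∈ Finset.range n, χ (X i ω)) / n) atTop
        (𝓝 μ[χ ∘ X₀]) := by
    intro χ hχ hχi
    have hid : ∀ i, IdentDistrib (χ ∘ X i) (χ ∘ X₀) μ μ := fun i => (hident i).comp hχ
    have := strong_law_ae_real (fun i => χ ∘ X i) ((hid 0).integrable_iff.2 hχi)
      (fun i j hij => (hindep hij).comp hχ hχ) fun i => (hid i).trans (hid 0).symm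
    rwa [(hid 0).integral_eq] at this
  refine tendstoInMeasure_of_tendsto_ae (fun n => ?_) ?_
  · have hX : ∀ i, AEMeasurable (X i) μ := fun i => (hident i).aemeasurable_fst
    exact ((Finset.aemeasurable_fun_sum _ fun i _ => hφ.comp_aemeasurable (hX i)).div
      (Finset.aemeasurable_fun_sum _ fun i _ => hψ.comp_aemeasurable (hX i))).aestronglyMeasurable
  · filter_upwards [slln hφ hφi, slln hψ hψi] with ω hu hv
    exact tendsto_div_of_tendsto_div_natCast hu hv hψ₀

theorem ProbabilityTheory.integral_cond {Ω : Type*} [MeasurableSpace Ω] (μ : Measure Ω)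
    (s : Set Ω) (f : Ω → ℝ) : ∫ x, f x ∂μ[|s] = (μ s).toReal⁻¹ * ∫ x in s, f x ∂μ := by
  rw [ProbabilityTheory.cond, integral_smul_measure, ENNReal.toReal_inv, smul_eq_mul]

theorem stmt_0_general
    {Ω 𝓩 𝓦 : Type*} [MeasurableSpace Ω] [StandardBorelSpace Ω]
    [MeasurableSpace 𝓩] [MeasurableSpace 𝓦]
    (P : Measure Ω) [IsProbabilityMeasure P]
    {J : ℕ} (Z : Ω → 𝓩) (W : Ω → 𝓦) (A : Ω → Fin J) (Y : Fin J → Ω → ℝ)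
    (hZ : Measurable Z) (hA : Measurable A)
    (hY : ∀ m, Measurable (Y m))
    (π : Fin J → 𝓩 → ℝ) (hπmeas : ∀ m, Measurable (π m))
    -- Assumption 1: A ⟂ (W, Y^(1),…,Y^(J)) given Z
    (hCI : CondIndepFun (MeasurableSpace.comap Z inferInstance) hZ.comap_le A
        (fun ω => (W ω, fun m => Y m ω)) P)
    -- Assumption 1: P(A = m | Z) = π_m(Z) a.s.
    (hprop : ∀ m : Fin J,
      (P[ Set.indicator {ω' | A ω' = m} (fun _ => (1:ℝ)) | MeasurableSpace.comap Z inferInstance])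
        =ᵐ[P] fun ω => π m (Z ω))
    (j k : Fin J)
    -- the ECE event, with positive probability
    (ECE : Set Ω) (hECE : ECE = {ω | 0 < π j (Z ω) ∧ 0 < π k (Z ω)})
    -- observed outcome Y = Y^(A)
    (Yobs : Ω → ℝ) (hYobs : ∀ ω, Yobs ω = Y (A ω) ω)
    -- i.i.d. sample
    (Ws : ℕ → Ω → 𝓦) (Zs : ℕ → Ω → 𝓩) (As : ℕ → Ω → Fin J) (Ys : ℕ → Ω → ℝ)
    (hiid : iIndepFun (fun i ω => (Ws i ω, Zs i ω, As i ω, Ys i ω)) P)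
    (hident : ∀ i, IdentDistrib (fun ω => (Ws i ω, Zs i ω, As i ω, Ys i ω))
        (fun ω => (W ω, Z ω, A ω, Yobs ω)) P P)
    -- Y^(j) integrable and E_jk[π_j(Z)] > 0
    (hYint : Integrable (Y j) P)
    (hπpos : 0 < ∫ ω, π j (Z ω) ∂P[|ECE]) :
    TendstoInMeasure P
      (fun n ω =>
        (∑ i ∈ Finset.range n,
            if (0 < π j (Zs i ω) ∧ 0 < π k (Zs i ω)) ∧ As i ω = j then Ys i ω else 0)
        / (∑ i ∈ Finset.range n,
            if (0 < π j (Zs i ω) ∧ 0 < π k (Zs i ω)) ∧ As i ω = j then (1:ℝ) else 0))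
      atTop
      (fun _ =>
        (∫ ω, π j (Z ω) * (P[Y j|MeasurableSpace.comap Z inferInstance]) ω ∂P[|ECE])
        / (∫ ω, π j (Z ω) ∂P[|ECE])) := by
  have hm : MeasurableSpace.comap Z inferInstance ≤ ‹MeasurableSpace Ω› := hZ.comap_le
  have hC : MeasurableSet {z | 0 < π j z ∧ 0 < π k z} :=
    (measurableSet_lt measurable_const (hπmeas j)).inter
      (measurableSet_lt measurable_const (hπmeas k))
  have hECEm : MeasurableSet[MeasurableSpace.comap Z inferInstance] ECE := hECE ▸ ⟨_, hC, rfl⟩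
  have hE : MeasurableSet ECE := hm _ hECEm
  have hT : MeasurableSet (A ⁻¹' {j}) := hA (measurableSet_singleton j)
  let φ : 𝓦 × 𝓩 × Fin J × ℝ → ℝ := fun q =>
    if (0 < π j q.2.1 ∧ 0 < π k q.2.1) ∧ q.2.2.1 = j then q.2.2.2 else 0
  let ψ : 𝓦 × 𝓩 × Fin J × ℝ → ℝ := fun q =>
    if (0 < π j q.2.1 ∧ 0 < π k q.2.1) ∧ q.2.2.1 = j then 1 else 0
  let X₀ : Ω → 𝓦 × 𝓩 × Fin J × ℝ := fun ω => (W ω, Z ω, A ω, Yobs ω)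
  have hφX : φ ∘ X₀ = ECE.indicator ((A ⁻¹' {j}).indicator (Y j)) := by
    funext ω
    by_cases h : ω ∈ ECE <;> by_cases h' : A ω = j <;> simp_all [φ, X₀]
  have hψX : ψ ∘ X₀ = ECE.indicator ((A ⁻¹' {j}).indicator 1) := by
    funext ω
    by_cases h : ω ∈ ECE <;> by_cases h' : A ω = j <;> simp_all [ψ, X₀]
  have hnum : P[φ ∘ X₀] =
      ∫ ω in ECE, π j (Z ω) * P[Y j|MeasurableSpace.comap Z inferInstance] ω ∂P := by
    rw [hφX, integral_indicator hE]
    exact setIntegral_indicator_eq_setIntegral_mul_condExp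
      (hCI.comp measurable_id ((measurable_pi_apply j).comp measurable_snd)) hA (hY j) hYint
      (measurableSet_singleton j) (hprop j) hECEm
  have hden : P[ψ ∘ X₀] = ∫ ω in ECE, π j (Z ω) ∂P := by
    rw [hψX, integral_indicator hE]
    exact setIntegral_eq_of_condExp_ae_eq hm ((integrable_const 1).indicator hT) (hprop j) hECEm
  simp only [integral_cond] at hπpos ⊢
  rw [mul_div_mul_left _ _ (left_ne_zero_of_mul hπpos.ne'), ← hnum, ← hden]
  have hS : MeasurableSet {q : 𝓦 × 𝓩 × Fin J × ℝ | (0 < π j q.2.1 ∧ 0 < π k q.2.1) ∧ q.2.2.1 = j} :=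
    (hC.preimage measurable_snd.fst).inter (measurable_snd.snd.fst (measurableSet_singleton j))
  exact tendstoInMeasure_sum_div_sum (φ := φ) (ψ := ψ) (fun i i' h => hiid.indepFun h) hident
    (Measurable.ite hS measurable_snd.snd.snd measurable_const)
    (Measurable.ite hS measurable_const measurable_const)
    (hφX ▸ (hYint.indicator hT).indicator hE)
    (hψX ▸ ((integrable_const 1).indicator hT).indicator hE)
    (hden ▸ right_ne_zero_of_mul hπpos.ne')

/-- the naive estimator converges in probability to
E_jk[π_j(Z)E(Y^(j)|Z)] / E_jk[π_j(Z)]. -/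
theorem stmt_0
    {Ω 𝓩 𝓦 : Type*} [MeasurableSpace Ω] [StandardBorelSpace Ω]
    [MeasurableSpace 𝓩] [MeasurableSpace 𝓦]
    (P : Measure Ω) [IsProbabilityMeasure P]
    {J : ℕ} (Z : Ω → 𝓩) (W : Ω → 𝓦) (A : Ω → Fin J) (Y : Fin J → Ω → ℝ)
    (hZ : Measurable Z) (hW : Measurable W) (hA : Measurable A)
    (hY : ∀ m, Measurable (Y m)) (hY2 : ∀ m, MemLp (Y m) 2 P)
    (π : Fin J → 𝓩 → ℝ) (hπmeas : ∀ m, Measurable (π m))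
    (hπ01 : ∀ m z, π m z ∈ Set.Icc (0:ℝ) 1)
    (hπsum : ∀ z, ∑ m, π m z = 1)
    -- Assumption 1: A ⟂ (W, Y^(1),…,Y^(J)) given Z
    (hCI : CondIndepFun (MeasurableSpace.comap Z inferInstance) hZ.comap_le A
        (fun ω => (W ω, fun m => Y m ω)) P)
    -- Assumption 1: P(A = m | Z) = π_m(Z) a.s.
    (hprop : ∀ m : Fin J,
      (P[ Set.indicator {ω' | A ω' = m} (fun _ => (1:ℝ)) | MeasurableSpace.comap Z inferInstance])
        =ᵐ[P] fun ω => π m (Z ω))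
    (j k : Fin J) (hjk : j ≠ k)
    -- the ECE event, with positive probability
    (ECE : Set Ω) (hECE : ECE = {ω | 0 < π j (Z ω) ∧ 0 < π k (Z ω)})
    (hECEpos : P ECE ≠ 0)
    -- observed outcome Y = Y^(A)
    (Yobs : Ω → ℝ) (hYobs : ∀ ω, Yobs ω = Y (A ω) ω)
    -- i.i.d. sample
    (Ws : ℕ → Ω → 𝓦) (Zs : ℕ → Ω → 𝓩) (As : ℕ → Ω → Fin J) (Ys : ℕ → Ω → ℝ)
    (hmeasWs : ∀ i, Measurable (Ws i)) (hmeasZs : ∀ i, Measurable (Zs i))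
    (hmeasAs : ∀ i, Measurable (As i)) (hmeasYs : ∀ i, Measurable (Ys i))
    (hiid : iIndepFun (fun i ω => (Ws i ω, Zs i ω, As i ω, Ys i ω)) P)
    (hident : ∀ i, IdentDistrib (fun ω => (Ws i ω, Zs i ω, As i ω, Ys i ω))
        (fun ω => (W ω, Z ω, A ω, Yobs ω)) P P)
    -- Y^(j) integrable and E_jk[π_j(Z)] > 0
    (hYint : Integrable (Y j) P)
    (hπpos : 0 < ∫ ω, π j (Z ω) ∂P[|ECE]) :
    TendstoInMeasure P
      (fun n ω =>
        (∑ i ∈ Finset.range n,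
            if (0 < π j (Zs i ω) ∧ 0 < π k (Zs i ω)) ∧ As i ω = j then Ys i ω else 0)
        / (∑ i ∈ Finset.range n,
            if (0 < π j (Zs i ω) ∧ 0 < π k (Zs i ω)) ∧ As i ω = j then (1:ℝ) else 0))
      atTop
      (fun _ =>
        (∫ ω, π j (Z ω) * (P[Y j|MeasurableSpace.comap Z inferInstance]) ω ∂P[|ECE])
        / (∫ ω, π j (Z ω) ∂P[|ECE])) :=
  stmt_0_general P Z W A Y hZ hA hY π hπmeas hCI hprop j k ECE hECE Yobs hYobs Ws Zs As Ys hiid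
    hident hYint hπpos
end

section
/- (Lemma S1.) Suppose S is a random variable that is a measurable function of Z such that each of π_1(Z),…,π_J(Z) is measurable with respect to the σ-algebra generated by S. Then under Assumption 1: (a) A is conditionally independent of (W, Y^(1),…,Y^(J)) given S; and (b) for every j ∈ {1,…,J}, P(A = j | S) = π_j(Z) almost surely. -/
/-!
Since σ(S) ⊆ σ(Z), the tower property gives E[· | S] = E[E[· | Z] | S]. The conditional
probability P(A ∈ s | Z) = ∑_{j ∈ s} π_j(Z) is σ(S)-measurable, so it passes unchanged to the
conditioning on S, and it can be pulled out of E[· | S] in the factorisation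
P(A ∈ s, X ∈ t | Z) = P(A ∈ s | Z) P(X ∈ t | Z), X = (W, Y^(1),…,Y^(J)), supplied by
Assumption 1.
-/

open MeasureTheory ProbabilityTheory Filter Set

section CondExpCoarsening

variable {Ω : Type*} {m m' mΩ : MeasurableSpace Ω} {μ : Measure Ω} [IsFiniteMeasure μ]

theorem condExp_ae_eq_of_condExp_ae_eq_stronglyMeasurable (hmm' : m ≤ m') (hm' : m' ≤ mΩ)
    {f h : Ω → ℝ} (hh : StronglyMeasurable[m] h) (hfh : μ[f | m'] =ᵐ[μ] h) :
    μ[f | m] =ᵐ[μ] h :=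
  calc μ[f | m] =ᵐ[μ] μ[μ[f | m'] | m] := (condExp_condExp_of_le hmm' hm').symm
    _ =ᵐ[μ] μ[h | m] := condExp_congr_ae hfh
    _ = h := condExp_of_stronglyMeasurable (hmm'.trans hm') hh (integrable_condExp.congr hfh)

theorem condExp_mul_ae_eq_mul_of_le (hmm' : m ≤ m') (hm' : m' ≤ mΩ) {f g h : Ω → ℝ}
    (hh : StronglyMeasurable[m] h) (hfh : μ[f | m'] =ᵐ[μ] h)
    (hfg : μ[f * g | m'] =ᵐ[μ] μ[f | m'] * μ[g | m']) :
    μ[f * g | m] =ᵐ[μ] μ[f | m] * μ[g | m] := by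
  have hprod : μ[f * g | m'] =ᵐ[μ] h * μ[g | m'] := hfg.trans (hfh.mul EventuallyEq.rfl)
  calc μ[f * g | m] =ᵐ[μ] μ[μ[f * g | m'] | m] := (condExp_condExp_of_le hmm' hm').symm
    _ =ᵐ[μ] μ[h * μ[g | m'] | m] := condExp_congr_ae hprod
    _ =ᵐ[μ] h * μ[μ[g | m'] | m] :=
      condExp_mul_of_stronglyMeasurable_left hh (integrable_condExp.congr hprod) integrable_condExp
    _ =ᵐ[μ] h * μ[g | m] := EventuallyEq.rfl.mul (condExp_condExp_of_le hmm' hm')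
    _ =ᵐ[μ] μ[f | m] * μ[g | m] :=
      (condExp_ae_eq_of_condExp_ae_eq_stronglyMeasurable hmm' hm' hh hfh).symm.mul EventuallyEq.rfl

theorem CondIndepFun.of_le_of_condExp_stronglyMeasurable [StandardBorelSpace Ω]
    {β γ : Type*} [MeasurableSpace β] [MeasurableSpace γ] {f : Ω → β} {g : Ω → γ}
    (hmm' : m ≤ m') (hm' : m' ≤ mΩ) (hf : Measurable f) (hg : Measurable g)
    (hfg : CondIndepFun m' hm' f g μ)
    (hlaw : ∀ s, MeasurableSet s →
      ∃ h : Ω → ℝ, StronglyMeasurable[m] h ∧ μ⟦f ⁻¹' s | m'⟧ =ᵐ[μ] h) :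
    CondIndepFun m (hmm'.trans hm') f g μ := by
  rw [condIndepFun_iff_condExp_inter_preimage_eq_mul hf hg] at hfg ⊢
  intro s t hs ht
  obtain ⟨h, hh, hfh⟩ := hlaw s hs
  have key := hfg s t hs ht
  rw [show (fun _ : Ω ↦ (1 : ℝ)) = 1 from rfl, inter_indicator_one] at key ⊢
  exact condExp_mul_ae_eq_mul_of_le hmm' hm' hh hfh key

end CondExpCoarsening

theorem condExp_indicator_preimage_ae_eq_sum {Ω ι : Type*} {m mΩ : MeasurableSpace Ω}
    {μ : Measure Ω} [IsFiniteMeasure μ] [DecidableEq ι] [MeasurableSpace ι]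
    [MeasurableSingletonClass ι] {A : Ω → ι} (hA : Measurable A) {p : ι → Ω → ℝ}
    (hp : ∀ j, μ⟦{ω | A ω = j} | m⟧ =ᵐ[μ] p j) (s : Finset ι) :
    μ⟦A ⁻¹' s | m⟧ =ᵐ[μ] fun ω ↦ ∑ j ∈ s, p j ω := by
  have hsum : (A ⁻¹' s).indicator (fun _ ↦ (1 : ℝ)) =
      ∑ j ∈ s, {ω | A ω = j}.indicator (fun _ ↦ (1 : ℝ)) := by
    ext ω
    by_cases hω : A ω ∈ s <;> simp [hω, Set.indicator_apply]
  rw [hsum]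
  refine (condExp_finsetSum (fun j _ ↦ ?_) m).trans ?_
  · exact (integrable_const 1).indicator (hA (measurableSet_singleton j))
  · filter_upwards [(eventually_all_finset s).2 fun j _ ↦ hp j] with ω hω
    simp only [Finset.sum_apply]
    exact Finset.sum_congr rfl hω

theorem stmt_2_general
    {Ω 𝓩 𝓦 𝓢 : Type*} [MeasurableSpace Ω] [StandardBorelSpace Ω]
    [MeasurableSpace 𝓩] [MeasurableSpace 𝓦] [MeasurableSpace 𝓢]
    (P : Measure Ω) [IsProbabilityMeasure P]
    {J : ℕ} (Z : Ω → 𝓩) (W : Ω → 𝓦) (A : Ω → Fin J) (Y : Fin J → Ω → ℝ)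
    (hZ : Measurable Z) (hW : Measurable W) (hA : Measurable A)
    (hY : ∀ m, Measurable (Y m))
    (π : Fin J → 𝓩 → ℝ)
    -- Assumption 1: A ⟂ (W, Y^(1),…,Y^(J)) given Z
    (hCI : CondIndepFun (MeasurableSpace.comap Z inferInstance) hZ.comap_le A
        (fun ω => (W ω, fun m => Y m ω)) P)
    -- Assumption 1: P(A = m | Z) = π_m(Z) a.s.
    (hprop : ∀ m : Fin J,
      (P[ Set.indicator {ω' | A ω' = m} (fun _ => (1:ℝ)) | MeasurableSpace.comap Z inferInstance])
        =ᵐ[P] fun ω => π m (Z ω))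
    -- S is a measurable function of Z
    (S : Ω → 𝓢) (hS : Measurable S) (hSZ : ∃ g : 𝓩 → 𝓢, Measurable g ∧ ∀ ω, S ω = g (Z ω))
    -- each π_m(Z) is measurable with respect to σ(S)
    (hπS : ∀ m : Fin J,
      Measurable[MeasurableSpace.comap S inferInstance] (fun ω => π m (Z ω))) :
    CondIndepFun (MeasurableSpace.comap S inferInstance) hS.comap_le A
        (fun ω => (W ω, fun m => Y m ω)) P
    ∧ ∀ m : Fin J,
      (P[ Set.indicator {ω' | A ω' = m} (fun _ => (1:ℝ)) | MeasurableSpace.comap S inferInstance])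
        =ᵐ[P] fun ω => π m (Z ω) := by
  classical
  obtain ⟨g, hg, hSg⟩ := hSZ
  have hSZle : MeasurableSpace.comap S inferInstance ≤ MeasurableSpace.comap Z inferInstance :=
    (funext hSg : S = g ∘ Z) ▸ (hg.comp (comap_measurable Z)).comap_le
  refine ⟨?_, fun m ↦ condExp_ae_eq_of_condExp_ae_eq_stronglyMeasurable hSZle hZ.comap_le
    (hπS m).stronglyMeasurable (hprop m)⟩
  refine CondIndepFun.of_le_of_condExp_stronglyMeasurable hSZle hZ.comap_le hA
    (hW.prodMk (measurable_pi_lambda _ hY)) hCI fun s _ ↦ ?_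
  exact ⟨fun ω ↦ ∑ j ∈ s.toFinset, π j (Z ω),
    (Finset.measurable_sum _ fun j _ ↦ hπS j).stronglyMeasurable,
    by simpa only [coe_toFinset] using condExp_indicator_preimage_ae_eq_sum hA hprop s.toFinset⟩

/-- Lemma S1: if S is a measurable function of Z such that each π_m(Z) is
σ(S)-measurable, then A ⟂ (W, Y^(1),…,Y^(J)) given S and P(A = m | S) = π_m(Z) a.s. -/
theorem stmt_2
    {Ω 𝓩 𝓦 𝓢 : Type*} [MeasurableSpace Ω] [StandardBorelSpace Ω]
    [MeasurableSpace 𝓩] [MeasurableSpace 𝓦] [MeasurableSpace 𝓢]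
    (P : Measure Ω) [IsProbabilityMeasure P]
    {J : ℕ} (Z : Ω → 𝓩) (W : Ω → 𝓦) (A : Ω → Fin J) (Y : Fin J → Ω → ℝ)
    (hZ : Measurable Z) (hW : Measurable W) (hA : Measurable A)
    (hY : ∀ m, Measurable (Y m)) (hY2 : ∀ m, MemLp (Y m) 2 P)
    (π : Fin J → 𝓩 → ℝ) (hπmeas : ∀ m, Measurable (π m))
    (hπ01 : ∀ m z, π m z ∈ Set.Icc (0:ℝ) 1)
    (hπsum : ∀ z, ∑ m, π m z = 1)
    -- Assumption 1: A ⟂ (W, Y^(1),…,Y^(J)) given Z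
    (hCI : CondIndepFun (MeasurableSpace.comap Z inferInstance) hZ.comap_le A
        (fun ω => (W ω, fun m => Y m ω)) P)
    -- Assumption 1: P(A = m | Z) = π_m(Z) a.s.
    (hprop : ∀ m : Fin J,
      (P[ Set.indicator {ω' | A ω' = m} (fun _ => (1:ℝ)) | MeasurableSpace.comap Z inferInstance])
        =ᵐ[P] fun ω => π m (Z ω))
    -- S is a measurable function of Z
    (S : Ω → 𝓢) (hS : Measurable S) (hSZ : ∃ g : 𝓩 → 𝓢, Measurable g ∧ ∀ ω, S ω = g (Z ω))
    -- each π_m(Z) is measurable with respect to σ(S)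
    (hπS : ∀ m : Fin J,
      Measurable[MeasurableSpace.comap S inferInstance] (fun ω => π m (Z ω))) :
    CondIndepFun (MeasurableSpace.comap S inferInstance) hS.comap_le A
        (fun ω => (W ω, fun m => Y m ω)) P
    ∧ ∀ m : Fin J,
      (P[ Set.indicator {ω' | A ω' = m} (fun _ => (1:ℝ)) | MeasurableSpace.comap S inferInstance])
        =ᵐ[P] fun ω => π m (Z ω) :=
  stmt_2_general P Z W A Y hZ hW hA hY π hCI hprop S hS hSZ hπS
end

section
/- Under Assumption 1, if E_jk[ε_jk²/π_j(Z)] < ∞, then conditional on the ECE event the augmented inverse-probability-weighted influence term satisfies Var_jk( 1{A = j} ε_jk / π_j(Z) + μ_jk(X) ) = E_jk[ ε_jk² / π_j(Z) ] + λ_jk − δ_jk². -/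
open MeasureTheory ProbabilityTheory Filter Set
open scoped ENNReal

noncomputable section

/-! Conditional independence of `A` and `V = (W, Y)` given `Z` upgrades `P(A = j | Z) = π_j(Z)` to
`P(A = j | Z, V) = π_j(Z)`. We record this as the equality, on `σ(Z, V)`, of `P` restricted to
`{A = j}` and `P` with density `π_j(Z)` (checked on rectangles, then by Dynkin's π-λ theorem);
it survives conditioning on the `σ(Z, V)`-measurable ECE event, and in measure form it needs no
integrability side conditions. Since `ε_jk`, `μ_jk(X)` and `π_j(Z)` are `σ(Z, V)`-measurable, the
IPW term `S = 1{A = j} ε_jk / π_j(Z)` then satisfies `E_jk[S] = E_jk[ε_jk]`,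
`E_jk[S μ_jk(X)] = E_jk[ε_jk μ_jk(X)]` and `E_jk[S²] = E_jk[ε_jk² / π_j(Z)]`; expanding
`Var(S + μ_jk(X))` and `Var(ε_jk + μ_jk(X))` through covariances gives the identity. -/

section

variable {Ω : Type*} [MeasurableSpace Ω] {μ : Measure Ω}

lemma MeasureTheory.MemLp.cond {E : Type*} [NormedAddCommGroup E] {f : Ω → E} {p : ℝ≥0∞}
    (hf : MemLp f p μ) {s : Set Ω} (hs : μ s ≠ 0) : MemLp f p μ[|s] :=
  (hf.restrict s).smul_measure (ENNReal.inv_ne_top.2 hs)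

lemma variance_add_eq_of_integral_eq [IsProbabilityMeasure μ] {S ε U : Ω → ℝ}
    (hS : MemLp S 2 μ) (hε : MemLp ε 2 μ) (hU : MemLp U 2 μ)
    (h1 : ∫ ω, S ω ∂μ = ∫ ω, ε ω ∂μ) (h2 : ∫ ω, S ω * U ω ∂μ = ∫ ω, ε ω * U ω ∂μ) :
    Var[fun ω => S ω + U ω; μ]
      = ∫ ω, S ω ^ 2 ∂μ + (Var[fun ω => ε ω + U ω; μ] - Var[ε; μ]) - (∫ ω, ε ω ∂μ) ^ 2 := by
  rw [variance_fun_add hS hU, variance_fun_add hε hU, covariance_eq_sub hS hU,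
    covariance_eq_sub hε hU, variance_eq_sub hS]
  simp only [Pi.mul_apply, Pi.pow_apply]
  rw [h1, h2]
  ring

end

section

variable {Ω : Type*} {m m0 : MeasurableSpace Ω} {μ : Measure Ω} {T : Set Ω}

lemma trim_restrict_cond_eq_of_trim_eq (hm : m ≤ m0) {f : Ω → ℝ≥0∞} {E : Set Ω}
    (hE : MeasurableSet[m] E)
    (h : (μ.restrict T).trim hm = (μ.withDensity f).trim hm) :
    (μ[|E].restrict T).trim hm = (μ[|E].withDensity f).trim hm := by
  refine @Measure.ext _ m _ _ fun s hs => ?_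
  have hsE : MeasurableSet[m] (s ∩ E) := hs.inter hE
  have hagree := congrArg (· (s ∩ E)) h
  simp only [trim_measurableSet_eq hm hsE, Measure.restrict_apply (hm _ hsE),
    withDensity_apply _ (hm _ hsE)] at hagree
  rw [trim_measurableSet_eq hm hs, trim_measurableSet_eq hm hs, Measure.restrict_apply (hm _ hs),
    withDensity_apply _ (hm _ hs), ProbabilityTheory.cond, Measure.smul_apply,
    Measure.restrict_smul, lintegral_smul_measure, Measure.restrict_restrict (hm _ hs), ← hagree,
    Measure.restrict_apply' (hm _ hE), Set.inter_right_comm]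

variable {q : Ω → ℝ}

lemma setIntegral_eq_integral_mul_of_trim_eq (hm : m ≤ m0) (hq : Measurable q)
    (hq0 : ∀ᵐ ω ∂μ, 0 ≤ q ω)
    (h : (μ.restrict T).trim hm = (μ.withDensity fun ω => ENNReal.ofReal (q ω)).trim hm)
    {g : Ω → ℝ} (hg : StronglyMeasurable[m] g) :
    ∫ ω in T, g ω ∂μ = ∫ ω, q ω * g ω ∂μ := by
  rw [integral_trim hm hg, h, ← integral_trim hm hg,
    integral_withDensity_eq_integral_toReal_smul hq.ennreal_ofReal
      (ae_of_all _ fun _ => ENNReal.ofReal_lt_top)]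
  refine integral_congr_ae ?_
  filter_upwards [hq0] with ω hω
  rw [ENNReal.toReal_ofReal hω, smul_eq_mul]

lemma setLIntegral_eq_lintegral_mul_of_trim_eq (hm : m ≤ m0) (hq : Measurable q)
    (h : (μ.restrict T).trim hm = (μ.withDensity fun ω => ENNReal.ofReal (q ω)).trim hm)
    {g : Ω → ℝ≥0∞} (hg : Measurable[m] g) :
    ∫⁻ ω in T, g ω ∂μ = ∫⁻ ω, ENNReal.ofReal (q ω) * g ω ∂μ := by
  rw [← lintegral_trim hm hg, h, lintegral_trim hm hg,
    lintegral_withDensity_eq_lintegral_mul _ hq.ennreal_ofReal (hg.mono hm le_rfl)]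
  rfl

lemma integral_indicator_div_mul_eq_of_trim_eq (hm : m ≤ m0) (hT : MeasurableSet T)
    (hq : Measurable[m] q) (hq_pos : ∀ᵐ ω ∂μ, 0 < q ω)
    (h : (μ.restrict T).trim hm = (μ.withDensity fun ω => ENNReal.ofReal (q ω)).trim hm)
    {g u : Ω → ℝ} (hg : Measurable[m] g) (hu : Measurable[m] u) :
    ∫ ω, T.indicator (fun ω => g ω / q ω) ω * u ω ∂μ = ∫ ω, g ω * u ω ∂μ := by
  simp_rw [← Set.indicator_mul_left]
  rw [integral_indicator hT, setIntegral_eq_integral_mul_of_trim_eq hm (hq.mono hm le_rfl)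
    (hq_pos.mono fun _ => le_of_lt) h (g := fun ω => g ω / q ω * u ω)
    ((hg.div hq).mul hu).stronglyMeasurable]
  refine integral_congr_ae ?_
  filter_upwards [hq_pos] with ω hω
  field_simp

lemma integral_indicator_div_sq_eq_of_trim_eq (hm : m ≤ m0) (hT : MeasurableSet T)
    (hq : Measurable[m] q) (hq_pos : ∀ᵐ ω ∂μ, 0 < q ω)
    (h : (μ.restrict T).trim hm = (μ.withDensity fun ω => ENNReal.ofReal (q ω)).trim hm)
    {g : Ω → ℝ} (hg : Measurable[m] g) :
    ∫ ω, T.indicator (fun ω => g ω / q ω) ω ^ 2 ∂μ = ∫ ω, g ω ^ 2 / q ω ∂μ := by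
  -- `S ^ 2 = S * (g / q)`, so the mixed-moment identity applies with `u = g / q`.
  have hsq : ∀ ω, T.indicator (fun ω => g ω / q ω) ω ^ 2
      = T.indicator (fun ω => g ω / q ω) ω * (g ω / q ω) := by
    intro ω
    by_cases hω : ω ∈ T <;> simp [hω, sq]
  simp_rw [hsq]
  refine (integral_indicator_div_mul_eq_of_trim_eq hm hT hq hq_pos h hg (hg.div hq)).trans ?_
  congr with ω
  simp only [Pi.div_apply]
  ring

lemma memLp_indicator_div_of_trim_eq (hm : m ≤ m0) (hT : MeasurableSet T)
    (hq : Measurable[m] q) (hq_pos : ∀ᵐ ω ∂μ, 0 < q ω)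
    (h : (μ.restrict T).trim hm = (μ.withDensity fun ω => ENNReal.ofReal (q ω)).trim hm)
    {g : Ω → ℝ} (hg : Measurable[m] g)
    (hint : Integrable (fun ω => g ω ^ 2 / q ω) μ) :
    MemLp (T.indicator fun ω => g ω / q ω) 2 μ := by
  have hmeas : Measurable (T.indicator fun ω => g ω / q ω) :=
    ((hg.div hq).mono hm le_rfl).indicator hT
  refine (memLp_two_iff_integrable_sq hmeas.aestronglyMeasurable).2
    ⟨(hmeas.pow_const 2).aestronglyMeasurable, ?_⟩
  rw [hasFiniteIntegral_iff_ofReal (ae_of_all _ fun _ => sq_nonneg _)]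
  calc ∫⁻ ω, ENNReal.ofReal (T.indicator (fun ω => g ω / q ω) ω ^ 2) ∂μ
      = ∫⁻ ω in T, ENNReal.ofReal ((g ω / q ω) ^ 2) ∂μ := by
        rw [← lintegral_indicator hT]
        congr with ω
        by_cases hω : ω ∈ T <;> simp [hω]
    _ = ∫⁻ ω, ENNReal.ofReal (q ω) * ENNReal.ofReal ((g ω / q ω) ^ 2) ∂μ :=
        setLIntegral_eq_lintegral_mul_of_trim_eq hm (hq.mono hm le_rfl) h
          ((hg.div hq).pow_const 2).ennreal_ofReal
    _ = ∫⁻ ω, ENNReal.ofReal (g ω ^ 2 / q ω) ∂μ := by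
        refine lintegral_congr_ae ?_
        filter_upwards [hq_pos] with ω hω
        rw [← ENNReal.ofReal_mul hω.le]
        field_simp
    _ < ∞ := hint.lintegral_lt_top

lemma variance_indicator_div_add_of_trim_eq [IsProbabilityMeasure μ] (hm : m ≤ m0)
    (hT : MeasurableSet T) (hq : Measurable[m] q) (hq_pos : ∀ᵐ ω ∂μ, 0 < q ω)
    (h : (μ.restrict T).trim hm = (μ.withDensity fun ω => ENNReal.ofReal (q ω)).trim hm)
    {g u : Ω → ℝ} (hg : Measurable[m] g) (hu : Measurable[m] u) (hg2 : MemLp g 2 μ)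
    (hu2 : MemLp u 2 μ) (hint : Integrable (fun ω => g ω ^ 2 / q ω) μ) :
    Var[fun ω => T.indicator (fun ω => g ω / q ω) ω + u ω; μ]
      = ∫ ω, g ω ^ 2 / q ω ∂μ + (Var[fun ω => g ω + u ω; μ] - Var[g; μ]) - (∫ ω, g ω ∂μ) ^ 2 := by
  rw [← integral_indicator_div_sq_eq_of_trim_eq hm hT hq hq_pos h hg]
  refine variance_add_eq_of_integral_eq (memLp_indicator_div_of_trim_eq hm hT hq hq_pos h hg hint)
    hg2 hu2 ?_ (integral_indicator_div_mul_eq_of_trim_eq hm hT hq hq_pos h hg hu)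
  simpa using integral_indicator_div_mul_eq_of_trim_eq hm hT hq hq_pos h hg measurable_const
    (u := fun _ => 1)

end

section

variable {Ω 𝓩 𝓑 β : Type*} [MeasurableSpace Ω] [StandardBorelSpace Ω]
  [MeasurableSpace 𝓩] [MeasurableSpace 𝓑] [MeasurableSpace β]
  {P : Measure Ω} [IsFiniteMeasure P] {Z : Ω → 𝓩} {V : Ω → 𝓑} {A : Ω → β} {D : Set β}
  {p : 𝓩 → ℝ}

lemma measureReal_inter_preimage_eq_setIntegral_of_condIndepFun (hZ : Measurable Z)
    (hV : Measurable V) (hA : Measurable A) (hD : MeasurableSet D) (hp : Measurable p)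
    (hCI : CondIndepFun (MeasurableSpace.comap Z inferInstance) hZ.comap_le A V P)
    (hprop : P⟦A ⁻¹' D | MeasurableSpace.comap Z inferInstance⟧ =ᵐ[P] fun ω => p (Z ω))
    {B : Set 𝓩} {C : Set 𝓑} (hB : MeasurableSet B) (hC : MeasurableSet C) :
    P.real (Z ⁻¹' B ∩ V ⁻¹' C ∩ A ⁻¹' D) = ∫ ω in Z ⁻¹' B ∩ V ⁻¹' C, p (Z ω) ∂P := by
  have hZB : MeasurableSet[MeasurableSpace.comap Z inferInstance] (Z ⁻¹' B) := ⟨B, hB, rfl⟩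
  have hpZ : StronglyMeasurable[MeasurableSpace.comap Z inferInstance] fun ω => p (Z ω) :=
    (hp.comp (comap_measurable Z)).stronglyMeasurable
  have hpZ_int : Integrable (fun ω => p (Z ω)) P := integrable_condExp.congr hprop
  have hVC_int : Integrable ((V ⁻¹' C).indicator fun _ => (1 : ℝ)) P :=
    (integrable_const 1).indicator (hV hC)
  have hind : ∀ ω, p (Z ω) * (V ⁻¹' C).indicator (fun _ => (1 : ℝ)) ω
      = (V ⁻¹' C).indicator (fun ω => p (Z ω)) ω := by
    intro ω
    by_cases hω : ω ∈ V ⁻¹' C <;> simp [hω]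
  have hpVC_int :
      Integrable (fun ω => p (Z ω) * (V ⁻¹' C).indicator (fun _ => (1 : ℝ)) ω) P := by
    simpa only [hind] using hpZ_int.indicator (hV hC)
  have hfactor : P⟦A ⁻¹' D ∩ V ⁻¹' C | MeasurableSpace.comap Z inferInstance⟧
      =ᵐ[P] P[fun ω => p (Z ω) * (V ⁻¹' C).indicator (fun _ => (1 : ℝ)) ω |
        MeasurableSpace.comap Z inferInstance] := by
    filter_upwards [(condIndepFun_iff_condExp_inter_preimage_eq_mul hA hV).mp hCI D C hD hC, hprop,
      condExp_mul_of_stronglyMeasurable_left hpZ hpVC_int hVC_int] with ω h1 h2 h3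
    rw [h1, h2]
    exact h3.symm
  calc P.real (Z ⁻¹' B ∩ V ⁻¹' C ∩ A ⁻¹' D)
      = ∫ ω in Z ⁻¹' B, (A ⁻¹' D ∩ V ⁻¹' C).indicator (fun _ => (1 : ℝ)) ω ∂P := by
        rw [setIntegral_indicator ((hA hD).inter (hV hC)), setIntegral_const, smul_eq_mul, mul_one,
          Set.inter_comm (A ⁻¹' D), Set.inter_assoc]
    _ = ∫ ω in Z ⁻¹' B, (P[(A ⁻¹' D ∩ V ⁻¹' C).indicator fun _ => (1 : ℝ) |
          MeasurableSpace.comap Z inferInstance]) ω ∂P :=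
        (setIntegral_condExp hZ.comap_le
          ((integrable_const 1).indicator ((hA hD).inter (hV hC))) hZB).symm
    _ = ∫ ω in Z ⁻¹' B, (P[fun ω => p (Z ω) * (V ⁻¹' C).indicator (fun _ => (1 : ℝ)) ω |
          MeasurableSpace.comap Z inferInstance]) ω ∂P :=
        setIntegral_congr_ae (hZ.comap_le _ hZB) (hfactor.mono fun _ h _ => h)
    _ = ∫ ω in Z ⁻¹' B, p (Z ω) * (V ⁻¹' C).indicator (fun _ => (1 : ℝ)) ω ∂P :=
        setIntegral_condExp hZ.comap_le hpVC_int hZB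
    _ = ∫ ω in Z ⁻¹' B ∩ V ⁻¹' C, p (Z ω) ∂P := by
        simp only [hind, setIntegral_indicator (hV hC)]

theorem ProbabilityTheory.CondIndepFun.trim_restrict_preimage_eq_trim_withDensity
    (hZ : Measurable Z) (hV : Measurable V) (hA : Measurable A) (hD : MeasurableSet D)
    (hp : Measurable p)
    (hCI : CondIndepFun (MeasurableSpace.comap Z inferInstance) hZ.comap_le A V P)
    (hprop : P⟦A ⁻¹' D | MeasurableSpace.comap Z inferInstance⟧ =ᵐ[P] fun ω => p (Z ω)) :
    (P.restrict (A ⁻¹' D)).trim (hZ.prodMk hV).comap_le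
      = (P.withDensity fun ω => ENNReal.ofReal (p (Z ω))).trim (hZ.prodMk hV).comap_le := by
  have hpZ_int : Integrable (fun ω => p (Z ω)) P := integrable_condExp.congr hprop
  have hpZ_nonneg : 0 ≤ᵐ[P] fun ω => p (Z ω) := by
    filter_upwards [condExp_nonneg (m := MeasurableSpace.comap Z inferInstance)
      (f := (A ⁻¹' D).indicator fun _ => (1 : ℝ))
      (ae_of_all P fun ω => Set.indicator_nonneg (fun _ _ => zero_le_one) ω), hprop] with ω h1 h2
    exact h2 ▸ h1
  have hrect : ∀ B C, MeasurableSet B → MeasurableSet C →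
      P (Z ⁻¹' B ∩ V ⁻¹' C ∩ A ⁻¹' D)
        = ∫⁻ ω in Z ⁻¹' B ∩ V ⁻¹' C, ENNReal.ofReal (p (Z ω)) ∂P := by
    intro B C hB hC
    rw [← ofReal_integral_eq_lintegral_ofReal hpZ_int.integrableOn (ae_restrict_of_ae hpZ_nonneg),
      ← measureReal_inter_preimage_eq_setIntegral_of_condIndepFun hZ hV hA hD hp hCI hprop hB hC,
      ofReal_measureReal (measure_ne_top _ _)]
  refine ext_of_generate_finite _ ?_
    ((isPiSystem_prod (α := 𝓩) (β := 𝓑)).comap fun ω => (Z ω, V ω)) ?_ ?_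
  · conv_lhs => rw [← generateFrom_prod]
    exact MeasurableSpace.comap_generateFrom
  · rintro _ ⟨_, ⟨B, hB, C, hC, rfl⟩, rfl⟩
    have hBC := (hZ.prodMk hV) (hB.prod hC)
    have hBC' := measurableSet_preimage (comap_measurable fun ω => (Z ω, V ω)) (hB.prod hC)
    rw [trim_measurableSet_eq _ hBC', trim_measurableSet_eq _ hBC',
      Measure.restrict_apply hBC, withDensity_apply _ hBC]
    exact hrect B C hB hC
  · rw [trim_measurableSet_eq _ MeasurableSet.univ, trim_measurableSet_eq _ MeasurableSet.univ,
      Measure.restrict_apply MeasurableSet.univ, withDensity_apply _ MeasurableSet.univ]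
    simpa using hrect univ univ MeasurableSet.univ MeasurableSet.univ

end

theorem stmt_7_general
    {Ω 𝓩 𝓦 : Type*} [MeasurableSpace Ω] [StandardBorelSpace Ω]
    [MeasurableSpace 𝓩] [MeasurableSpace 𝓦]
    (P : Measure Ω) [IsProbabilityMeasure P]
    {J : ℕ} (Z : Ω → 𝓩) (W : Ω → 𝓦) (A : Ω → Fin J) (Y : Fin J → Ω → ℝ)
    (hZ : Measurable Z) (hW : Measurable W) (hA : Measurable A)
    (hY : ∀ m, Measurable (Y m)) (hY2 : ∀ m, MemLp (Y m) 2 P)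
    (π : Fin J → 𝓩 → ℝ) (hπmeas : ∀ m, Measurable (π m))
    -- Assumption 1: A ⟂ (W, Y^(1),…,Y^(J)) given Z
    (hCI : CondIndepFun (MeasurableSpace.comap Z inferInstance) hZ.comap_le A
        (fun ω => (W ω, fun m => Y m ω)) P)
    -- Assumption 1: P(A = m | Z) = π_m(Z) a.s.
    (hprop : ∀ m : Fin J,
      (P[ Set.indicator {ω' | A ω' = m} (fun _ => (1:ℝ)) | MeasurableSpace.comap Z inferInstance])
        =ᵐ[P] fun ω => π m (Z ω))
    (j k : Fin J)
    -- the ECE event, with positive probability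
    (ECE : Set Ω) (hECE : ECE = {ω | 0 < π j (Z ω) ∧ 0 < π k (Z ω)})
    (hECEpos : P ECE ≠ 0)
    -- working model: a covariate sub-vector X of W and a function μjk of X
    {𝓧 : Type*} [MeasurableSpace 𝓧]
    (X : Ω → 𝓧) (hXW : ∃ g : 𝓦 → 𝓧, Measurable g ∧ ∀ ω, X ω = g (W ω))
    (μjk : 𝓧 → ℝ) (hμjkm : Measurable μjk) (hμjk2 : MemLp (fun ω => μjk (X ω)) 2 P)
    -- residual, its conditional mean, and λ_jk
    (εjk : Ω → ℝ) (hεjk : ∀ ω, εjk ω = Y j ω - μjk (X ω))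
    (δjk : ℝ) (hδjk : δjk = ∫ ω, εjk ω ∂P[|ECE])
    (lamjk : ℝ) (hlamjk : lamjk = variance (Y j) P[|ECE] - variance εjk P[|ECE])
    -- finiteness of E_jk[ε_jk²/π_j(Z)]
    (hInt : Integrable (fun ω => εjk ω ^ 2 / π j (Z ω)) P[|ECE]) :
    variance
        (fun ω => Set.indicator {ω' | A ω' = j} (fun ω' => εjk ω' / π j (Z ω')) ω + μjk (X ω))
        P[|ECE]
      = (∫ ω, εjk ω ^ 2 / π j (Z ω) ∂P[|ECE]) + lamjk - δjk ^ 2 := by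
  obtain ⟨g, hg, hXg⟩ := hXW
  subst hδjk hlamjk
  set V : Ω → 𝓦 × (Fin J → ℝ) := fun ω => (W ω, fun m => Y m ω)
  have hV : Measurable V := hW.prodMk (measurable_pi_lambda _ hY)
  have hm := (hZ.prodMk hV).comap_le
  have hZV : Measurable[MeasurableSpace.comap (fun ω => (Z ω, V ω)) inferInstance]
      fun ω => (Z ω, V ω) := comap_measurable _
  have hπZ : Measurable[MeasurableSpace.comap (fun ω => (Z ω, V ω)) inferInstance]
      fun ω => π j (Z ω) := (hπmeas j).comp hZV.fst
  have hU : Measurable[MeasurableSpace.comap (fun ω => (Z ω, V ω)) inferInstance]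
      fun ω => μjk (X ω) := by
    rw [funext hXg]
    exact hμjkm.comp (hg.comp hZV.snd.fst)
  have hε : Measurable[MeasurableSpace.comap (fun ω => (Z ω, V ω)) inferInstance] εjk := by
    rw [funext hεjk]
    exact ((measurable_pi_apply j).comp hZV.snd.snd).sub hU
  have hECEm : MeasurableSet[MeasurableSpace.comap (fun ω => (Z ω, V ω)) inferInstance] ECE :=
    hECE ▸ (hπZ measurableSet_Ioi).inter (((hπmeas k).comp hZV.fst) measurableSet_Ioi)
  have hQ := trim_restrict_cond_eq_of_trim_eq hm hECEm
    (hCI.trim_restrict_preimage_eq_trim_withDensity hZ hV hA (measurableSet_singleton j)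
      (hπmeas j) (hprop j))
  have hπ_pos : ∀ᵐ ω ∂P[|ECE], 0 < π j (Z ω) :=
    ae_cond_of_forall_mem (hm _ hECEm) fun _ hω => (hECE ▸ hω).1
  have := cond_isProbabilityMeasure hECEpos
  have hU2 := hμjk2.cond hECEpos
  have hε2 : MemLp εjk 2 P[|ECE] := funext hεjk ▸ ((hY2 j).cond hECEpos).sub hU2
  rw [show Y j = fun ω => εjk ω + μjk (X ω) from funext fun ω => by rw [hεjk, sub_add_cancel]]
  exact variance_indicator_div_add_of_trim_eq hm (hA (measurableSet_singleton j)) hπZ hπ_pos hQ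
    hε hU hε2 hU2 hInt

/-- variance of the AIPW influence term. -/
theorem stmt_7
    {Ω 𝓩 𝓦 : Type*} [MeasurableSpace Ω] [StandardBorelSpace Ω]
    [MeasurableSpace 𝓩] [MeasurableSpace 𝓦]
    (P : Measure Ω) [IsProbabilityMeasure P]
    {J : ℕ} (Z : Ω → 𝓩) (W : Ω → 𝓦) (A : Ω → Fin J) (Y : Fin J → Ω → ℝ)
    (hZ : Measurable Z) (hW : Measurable W) (hA : Measurable A)
    (hY : ∀ m, Measurable (Y m)) (hY2 : ∀ m, MemLp (Y m) 2 P)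
    (π : Fin J → 𝓩 → ℝ) (hπmeas : ∀ m, Measurable (π m))
    (hπ01 : ∀ m z, π m z ∈ Set.Icc (0:ℝ) 1)
    (hπsum : ∀ z, ∑ m, π m z = 1)
    -- Assumption 1: A ⟂ (W, Y^(1),…,Y^(J)) given Z
    (hCI : CondIndepFun (MeasurableSpace.comap Z inferInstance) hZ.comap_le A
        (fun ω => (W ω, fun m => Y m ω)) P)
    -- Assumption 1: P(A = m | Z) = π_m(Z) a.s.
    (hprop : ∀ m : Fin J,
      (P[ Set.indicator {ω' | A ω' = m} (fun _ => (1:ℝ)) | MeasurableSpace.comap Z inferInstance])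
        =ᵐ[P] fun ω => π m (Z ω))
    (j k : Fin J) (hjk : j ≠ k)
    -- the ECE event, with positive probability
    (ECE : Set Ω) (hECE : ECE = {ω | 0 < π j (Z ω) ∧ 0 < π k (Z ω)})
    (hECEpos : P ECE ≠ 0)
    -- working model: a covariate sub-vector X of W and a function μjk of X
    {𝓧 : Type*} [MeasurableSpace 𝓧]
    (X : Ω → 𝓧) (hXW : ∃ g : 𝓦 → 𝓧, Measurable g ∧ ∀ ω, X ω = g (W ω))
    (μjk : 𝓧 → ℝ) (hμjkm : Measurable μjk) (hμjk2 : MemLp (fun ω => μjk (X ω)) 2 P)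
    -- residual, its conditional mean, and λ_jk
    (εjk : Ω → ℝ) (hεjk : ∀ ω, εjk ω = Y j ω - μjk (X ω))
    (δjk : ℝ) (hδjk : δjk = ∫ ω, εjk ω ∂P[|ECE])
    (lamjk : ℝ) (hlamjk : lamjk = variance (Y j) P[|ECE] - variance εjk P[|ECE])
    -- finiteness of E_jk[ε_jk²/π_j(Z)]
    (hInt : Integrable (fun ω => εjk ω ^ 2 / π j (Z ω)) P[|ECE]) :
    variance
        (fun ω => Set.indicator {ω' | A ω' = j} (fun ω' => εjk ω' / π j (Z ω')) ω + μjk (X ω))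
        P[|ECE]
      = (∫ ω, εjk ω ^ 2 / π j (Z ω) ∂P[|ECE]) + lamjk - δjk ^ 2 :=
  stmt_7_general P Z W A Y hZ hW hA hY hY2 π hπmeas hCI hprop j k ECE hECE hECEpos X hXW μjk hμjkm
    hμjk2 εjk hεjk δjk hδjk lamjk hlamjk hInt
end
end

section
/- (Corollary 1.) Under Assumption 1, with E_jk[(Y^(j))²/π_j(Z)] < ∞ and E_jk[(Y^(k))²/π_k(Z)] < ∞, let Σ_ipw = diag( E_jk[(Y^(j))²/π_j(Z)], E_jk[(Y^(k))²/π_k(Z)] ) − ϑϑᵀ with ϑ = (θ_jk, θ_kj)ᵀ, and Σ_sipw = diag( E_jk[(Y^(j)−θ_jk)²/π_j(Z)], E_jk[(Y^(k)−θ_kj)²/π_k(Z)] ). Then Σ_ipw − Σ_sipw = M₁ + M₂, where M₁ is the 2×2 matrix with diagonal entries θ_jk² E_jk[1/π_j(Z) − 1] and θ_kj² E_jk[1/π_k(Z) − 1] and both off-diagonal entries −θ_jk θ_kj, and M₂ = 2 · diag( θ_jk Cov_jk(Y^(j), 1/π_j(Z)), θ_kj Cov_jk(Y^(k), 1/π_k(Z))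 ). Moreover, if π_j(Z) + π_k(Z) ≤ 1 almost surely on the ECE event, then M₁ is positive semidefinite; and if additionally θ_jk Cov_jk(Y^(j), 1/π_j(Z)) ≥ 0 and θ_kj Cov_jk(Y^(k), 1/π_k(Z)) ≥ 0, then Σ_ipw − Σ_sipw is positive semidefinite. -/
/-
Expanding the square, `(Y - θ)² / π = Y² / π - 2θ Y / π + θ² / π`, and
`E[Y / π] = Cov(Y, 1 / π) + θ E[1 / π]`; this gives the diagonal of `Σ_ipw - Σ_sipw`, whose
off-diagonal entries `-θ_jk θ_kj` come from `ϑϑᵀ` alone. For `M₁`, if `s, t > 0` and `s + t ≤ 1`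
then `1/s - 1 ≥ t/s` and `1/t - 1 ≥ s/t`, and `u² t/s + v² s/t ≥ 2uv` by AM–GM; integrating over
the ECE event shows that the quadratic form of `M₁` is nonnegative. `M₂` is diagonal.
-/

open MeasureTheory ProbabilityTheory Filter Set

noncomputable section

def cov {Ω : Type*} [MeasurableSpace Ω] (μ : Measure Ω) (f g : Ω → ℝ) : ℝ :=
  ∫ ω, (f ω - ∫ x, f x ∂μ) * (g ω - ∫ x, g x ∂μ) ∂μ

lemma two_mul_le_of_add_le_one (u v : ℝ) {s t : ℝ} (hs : 0 < s) (ht : 0 < t) (hst : s + t ≤ 1) :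
    2 * u * v ≤ u ^ 2 * (1 / s - 1) + v ^ 2 * (1 / t - 1) := by
  have hs' : t / s ≤ 1 / s - 1 := by rw [div_sub_one hs.ne']; gcongr; linarith
  have ht' : s / t ≤ 1 / t - 1 := by rw [div_sub_one ht.ne']; gcongr; linarith
  calc 2 * u * v = u ^ 2 * (t / s) + v ^ 2 * (s / t) - (u * t - v * s) ^ 2 / (s * t) := by
        field_simp; ring
    _ ≤ u ^ 2 * (t / s) + v ^ 2 * (s / t) := by
        have : 0 ≤ (u * t - v * s) ^ 2 / (s * t) := by positivity
        linarith
    _ ≤ u ^ 2 * (1 / s - 1) + v ^ 2 * (1 / t - 1) := by gcongr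

lemma Matrix.posSemidef_of_fin_two {a b c : ℝ}
    (h : ∀ x y : ℝ, 0 ≤ a * x ^ 2 + 2 * b * x * y + c * y ^ 2) : (!![a, b; b, c]).PosSemidef := by
  refine .of_dotProduct_mulVec_nonneg ?_ fun x => ?_
  · ext i j
    fin_cases i <;> fin_cases j <;> rfl
  · have := h (x 0) (x 1)
    simp only [dotProduct, Pi.star_apply, star_trivial, mulVec, of_apply, cons_val',
      cons_val_fin_one, Fin.sum_univ_two, cons_val_zero, cons_val_one]
    linarith

section Moments

variable {Ω : Type*} [MeasurableSpace Ω] {μ : Measure Ω} [IsProbabilityMeasure μ]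

lemma cov_eq_integral_mul_sub {f g : Ω → ℝ} (hf : Integrable f μ) (hg : Integrable g μ)
    (hfg : Integrable (fun ω => f ω * g ω) μ) :
    cov μ f g = (∫ ω, f ω * g ω ∂μ) - (∫ ω, f ω ∂μ) * ∫ ω, g ω ∂μ := by
  set a := ∫ ω, f ω ∂μ
  set b := ∫ ω, g ω ∂μ
  have hfg' : Integrable (fun ω => f ω * g ω - a * g ω) μ := hfg.sub (hg.const_mul a)
  have hfg'' : Integrable (fun ω => f ω * g ω - a * g ω - b * f ω) μ := hfg'.sub (hf.const_mul b)
  calc cov μ f g = ∫ ω, (f ω * g ω - a * g ω - b * f ω + a * b) ∂μ := by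
        simp only [cov]; congr 1 with ω; ring
    _ = (∫ ω, f ω * g ω ∂μ) - a * b := by
        rw [integral_add hfg'' (integrable_const _), integral_sub hfg' (hf.const_mul b),
          integral_sub hfg (hg.const_mul a), integral_const_mul, integral_const_mul,
          integral_const, probReal_univ, one_smul]
        ring

lemma integral_sq_div_sub_integral_sub_sq_div {f p : Ω → ℝ} (hf : Integrable f μ)
    (hf2p : Integrable (fun ω => f ω ^ 2 / p ω) μ) (hfp : Integrable (fun ω => f ω / p ω) μ)
    (hp : Integrable (fun ω => 1 / p ω) μ) :
    (∫ ω, f ω ^ 2 / p ω ∂μ) - (∫ ω, f ω ∂μ) * (∫ ω, f ω ∂μ)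
        - ∫ ω, (f ω - ∫ x, f x ∂μ) ^ 2 / p ω ∂μ
      = (∫ ω, f ω ∂μ) ^ 2 * (∫ ω, (1 / p ω - 1) ∂μ)
        + 2 * ((∫ ω, f ω ∂μ) * cov μ f (fun ω => 1 / p ω)) := by
  set θ := ∫ ω, f ω ∂μ
  have hcov : cov μ f (fun ω => 1 / p ω) = (∫ ω, f ω / p ω ∂μ) - θ * ∫ ω, 1 / p ω ∂μ := by
    simpa only [mul_one_div] using
      cov_eq_integral_mul_sub hf hp (by simpa only [mul_one_div] using hfp)
  have hf2p' : Integrable (fun ω => f ω ^ 2 / p ω - 2 * θ * (f ω / p ω)) μ :=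
    hf2p.sub (hfp.const_mul _)
  have hexpand : ∀ ω, (f ω - θ) ^ 2 / p ω
      = f ω ^ 2 / p ω - 2 * θ * (f ω / p ω) + θ ^ 2 * (1 / p ω) := fun ω => by ring
  simp_rw [hexpand]
  rw [integral_add hf2p' (hp.const_mul _), integral_sub hf2p (hfp.const_mul _),
    integral_const_mul, integral_const_mul, integral_sub hp (integrable_const _),
    integral_const, probReal_univ, one_smul, hcov]
  ring

lemma two_mul_le_integral_inv_sub_one {p q : Ω → ℝ}
    (hp : Integrable (fun ω => 1 / p ω) μ) (hq : Integrable (fun ω => 1 / q ω) μ)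
    (hpos : ∀ᵐ ω ∂μ, 0 < p ω ∧ 0 < q ω) (hle : ∀ᵐ ω ∂μ, p ω + q ω ≤ 1) (u v : ℝ) :
    2 * u * v ≤ u ^ 2 * (∫ ω, (1 / p ω - 1) ∂μ) + v ^ 2 * ∫ ω, (1 / q ω - 1) ∂μ := by
  have hp' : Integrable (fun ω => u ^ 2 * (1 / p ω - 1)) μ :=
    (hp.sub (integrable_const 1)).const_mul _
  have hq' : Integrable (fun ω => v ^ 2 * (1 / q ω - 1)) μ :=
    (hq.sub (integrable_const 1)).const_mul _
  rw [← integral_const_mul, ← integral_const_mul, ← integral_add hp' hq']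
  calc 2 * u * v = ∫ _, 2 * u * v ∂μ := by rw [integral_const, probReal_univ, one_smul]
    _ ≤ _ := integral_mono_ae (integrable_const _) (hp'.add hq')
        (by filter_upwards [hpos, hle] with ω hω hω' using
          two_mul_le_of_add_le_one u v hω.1 hω.2 hω')

end Moments

theorem stmt_11_general
    {Ω 𝓩 : Type*} [MeasurableSpace Ω]
    [MeasurableSpace 𝓩]
    (P : Measure Ω) [IsProbabilityMeasure P]
    {J : ℕ} (Z : Ω → 𝓩) (Y : Fin J → Ω → ℝ)
    (hZ : Measurable Z)
    (hY2 : ∀ m, MemLp (Y m) 2 P)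
    (π : Fin J → 𝓩 → ℝ) (hπmeas : ∀ m, Measurable (π m))
    (j k : Fin J)
    -- the ECE event, with positive probability
    (ECE : Set Ω) (hECE : ECE = {ω | 0 < π j (Z ω) ∧ 0 < π k (Z ω)})
    (hECEpos : P ECE ≠ 0)
    -- θ_jk and θ_kj
    (θjk θkj : ℝ) (hθjk : θjk = ∫ ω, Y j ω ∂P[|ECE]) (hθkj : θkj = ∫ ω, Y k ω ∂P[|ECE])
    -- finiteness of the displayed conditional moments
    (hIntj : Integrable (fun ω => (Y j ω) ^ 2 / π j (Z ω)) P[|ECE])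
    (hIntk : Integrable (fun ω => (Y k ω) ^ 2 / π k (Z ω)) P[|ECE])
    (hIntj1 : Integrable (fun ω => 1 / π j (Z ω)) P[|ECE])
    (hIntk1 : Integrable (fun ω => 1 / π k (Z ω)) P[|ECE])
    (hIntjY : Integrable (fun ω => Y j ω / π j (Z ω)) P[|ECE])
    (hIntkY : Integrable (fun ω => Y k ω / π k (Z ω)) P[|ECE])
    -- the matrices
    (Sipw Ssipw M₁ M₂ : Matrix (Fin 2) (Fin 2) ℝ)
    (hSipw : Sipw =
      !![(∫ ω, (Y j ω) ^ 2 / π j (Z ω) ∂P[|ECE]) - θjk * θjk, -(θjk * θkj);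
         -(θjk * θkj), (∫ ω, (Y k ω) ^ 2 / π k (Z ω) ∂P[|ECE]) - θkj * θkj])
    (hSsipw : Ssipw =
      !![∫ ω, (Y j ω - θjk) ^ 2 / π j (Z ω) ∂P[|ECE], 0;
         0, ∫ ω, (Y k ω - θkj) ^ 2 / π k (Z ω) ∂P[|ECE]])
    (hM₁ : M₁ =
      !![θjk ^ 2 * ∫ ω, (1 / π j (Z ω) - 1) ∂P[|ECE], -(θjk * θkj);
         -(θjk * θkj), θkj ^ 2 * ∫ ω, (1 / π k (Z ω) - 1) ∂P[|ECE]])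
    (hM₂ : M₂ =
      !![2 * (θjk * cov P[|ECE] (Y j) (fun ω => 1 / π j (Z ω))), 0;
         0, 2 * (θkj * cov P[|ECE] (Y k) (fun ω => 1 / π k (Z ω)))]) :
    Sipw - Ssipw = M₁ + M₂
    ∧ ((∀ᵐ ω ∂P[|ECE], π j (Z ω) + π k (Z ω) ≤ 1) → M₁.PosSemidef)
    ∧ ((∀ᵐ ω ∂P[|ECE], π j (Z ω) + π k (Z ω) ≤ 1) →
        0 ≤ θjk * cov P[|ECE] (Y j) (fun ω => 1 / π j (Z ω)) →
        0 ≤ θkj * cov P[|ECE] (Y k) (fun ω => 1 / π k (Z ω)) →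
        (Sipw - Ssipw).PosSemidef) := by
  have hECEm : MeasurableSet ECE := hECE ▸
    (measurableSet_lt measurable_const ((hπmeas j).comp hZ)).inter
      (measurableSet_lt measurable_const ((hπmeas k).comp hZ))
  have := cond_isProbabilityMeasure (μ := P) hECEpos
  have hpos : ∀ᵐ ω ∂P[|ECE], 0 < π j (Z ω) ∧ 0 < π k (Z ω) := by
    filter_upwards [ae_cond_mem hECEm] with ω hω
    rwa [hECE] at hω
  have hIntY (m : Fin J) : Integrable (Y m) P[|ECE] :=
    ((hY2 m).integrable one_le_two).restrict.smul_measure (ENNReal.inv_ne_top.mpr hECEpos)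
  have hdiff : Sipw - Ssipw = M₁ + M₂ := by
    have hj := integral_sq_div_sub_integral_sub_sq_div (hIntY j) hIntj hIntjY hIntj1
    have hk := integral_sq_div_sub_integral_sub_sq_div (hIntY k) hIntk hIntkY hIntk1
    subst hθjk hθkj hSipw hSsipw hM₁ hM₂
    ext a b
    fin_cases a <;> fin_cases b <;> simp [hj, hk]
  have hM₁psd (hle : ∀ᵐ ω ∂P[|ECE], π j (Z ω) + π k (Z ω) ≤ 1) : M₁.PosSemidef :=
    hM₁ ▸ Matrix.posSemidef_of_fin_two fun x y => by
      linear_combination two_mul_le_integral_inv_sub_one hIntj1 hIntk1 hpos hle (θjk * x) (θkj * y)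
  refine ⟨hdiff, hM₁psd, fun hle hcovj hcovk => hdiff ▸ (hM₁psd hle).add ?_⟩
  exact hM₂ ▸ Matrix.posSemidef_of_fin_two fun x y => by
    linarith [mul_nonneg hcovj (sq_nonneg x), mul_nonneg hcovk (sq_nonneg y)]

/-- Corollary 1: decomposition of Σ_ipw − Σ_sipw and positive
semidefiniteness. -/
theorem stmt_11
    {Ω 𝓩 𝓦 : Type*} [MeasurableSpace Ω] [StandardBorelSpace Ω]
    [MeasurableSpace 𝓩] [MeasurableSpace 𝓦]
    (P : Measure Ω) [IsProbabilityMeasure P]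
    {J : ℕ} (Z : Ω → 𝓩) (W : Ω → 𝓦) (A : Ω → Fin J) (Y : Fin J → Ω → ℝ)
    (hZ : Measurable Z) (hW : Measurable W) (hA : Measurable A)
    (hY : ∀ m, Measurable (Y m)) (hY2 : ∀ m, MemLp (Y m) 2 P)
    (π : Fin J → 𝓩 → ℝ) (hπmeas : ∀ m, Measurable (π m))
    (hπ01 : ∀ m z, π m z ∈ Set.Icc (0:ℝ) 1)
    (hπsum : ∀ z, ∑ m, π m z = 1)
    -- Assumption 1: A ⟂ (W, Y^(1),…,Y^(J)) given Z
    (hCI : CondIndepFun (MeasurableSpace.comap Z inferInstance) hZ.comap_le A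
        (fun ω => (W ω, fun m => Y m ω)) P)
    -- Assumption 1: P(A = m | Z) = π_m(Z) a.s.
    (hprop : ∀ m : Fin J,
      (P[ Set.indicator {ω' | A ω' = m} (fun _ => (1:ℝ)) | MeasurableSpace.comap Z inferInstance])
        =ᵐ[P] fun ω => π m (Z ω))
    (j k : Fin J) (hjk : j ≠ k)
    -- the ECE event, with positive probability
    (ECE : Set Ω) (hECE : ECE = {ω | 0 < π j (Z ω) ∧ 0 < π k (Z ω)})
    (hECEpos : P ECE ≠ 0)
    -- θ_jk and θ_kj
    (θjk θkj : ℝ) (hθjk : θjk = ∫ ω, Y j ω ∂P[|ECE]) (hθkj : θkj = ∫ ω, Y k ω ∂P[|ECE])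
    -- finiteness of the displayed conditional moments
    (hIntj : Integrable (fun ω => (Y j ω) ^ 2 / π j (Z ω)) P[|ECE])
    (hIntk : Integrable (fun ω => (Y k ω) ^ 2 / π k (Z ω)) P[|ECE])
    (hIntj1 : Integrable (fun ω => 1 / π j (Z ω)) P[|ECE])
    (hIntk1 : Integrable (fun ω => 1 / π k (Z ω)) P[|ECE])
    (hIntjY : Integrable (fun ω => Y j ω / π j (Z ω)) P[|ECE])
    (hIntkY : Integrable (fun ω => Y k ω / π k (Z ω)) P[|ECE])
    -- the matrices
    (Sipw Ssipw M₁ M₂ : Matrix (Fin 2) (Fin 2) ℝ)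
    (hSipw : Sipw =
      !![(∫ ω, (Y j ω) ^ 2 / π j (Z ω) ∂P[|ECE]) - θjk * θjk, -(θjk * θkj);
         -(θjk * θkj), (∫ ω, (Y k ω) ^ 2 / π k (Z ω) ∂P[|ECE]) - θkj * θkj])
    (hSsipw : Ssipw =
      !![∫ ω, (Y j ω - θjk) ^ 2 / π j (Z ω) ∂P[|ECE], 0;
         0, ∫ ω, (Y k ω - θkj) ^ 2 / π k (Z ω) ∂P[|ECE]])
    (hM₁ : M₁ =
      !![θjk ^ 2 * ∫ ω, (1 / π j (Z ω) - 1) ∂P[|ECE], -(θjk * θkj);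
         -(θjk * θkj), θkj ^ 2 * ∫ ω, (1 / π k (Z ω) - 1) ∂P[|ECE]])
    (hM₂ : M₂ =
      !![2 * (θjk * cov P[|ECE] (Y j) (fun ω => 1 / π j (Z ω))), 0;
         0, 2 * (θkj * cov P[|ECE] (Y k) (fun ω => 1 / π k (Z ω)))]) :
    Sipw - Ssipw = M₁ + M₂
    ∧ ((∀ᵐ ω ∂P[|ECE], π j (Z ω) + π k (Z ω) ≤ 1) → M₁.PosSemidef)
    ∧ ((∀ᵐ ω ∂P[|ECE], π j (Z ω) + π k (Z ω) ≤ 1) →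
        0 ≤ θjk * cov P[|ECE] (Y j) (fun ω => 1 / π j (Z ω)) →
        0 ≤ θkj * cov P[|ECE] (Y k) (fun ω => 1 / π k (Z ω)) →
        (Sipw - Ssipw).PosSemidef) :=
  stmt_11_general P Z Y hZ hY2 π hπmeas j k ECE hECE hECEpos θjk θkj hθjk hθkj hIntj hIntk hIntj1
    hIntk1 hIntjY hIntkY Sipw Ssipw M₁ M₂ hSipw hSsipw hM₁ hM₂
end
end

section
/- Let U and V be random variables on a probability space with 0 < U, 0 < V and U + V ≤ 1 almost surely, and with 1/U and 1/V integrable. Then E[1/U − 1] · E[1/V − 1] ≥ 1. (Proof uses E[1/U − 1] ≥ E[V/U], E[1/V − 1] ≥ E[U/V], and the Cauchy–Schwarz inequality E[V/U]·E[U/V] ≥ 1.) -/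
/-!
Since `U + V ≤ 1`, the variable `1/U - 1 = (1 - U)/U` dominates `V/U`, and symmetrically
`1/V - 1` dominates `U/V`. The product of the two expectations is therefore at least
`E[V/U] · E[U/V]`, which is at least `1` by Cauchy–Schwarz, i.e. `E[X] · E[1/X] ≥ 1` for `X > 0`.
-/

open MeasureTheory ProbabilityTheory

section

variable {Ω : Type*} [MeasurableSpace Ω] {μ : Measure Ω}

lemma two_le_div_add_div {x a : ℝ} (hx : 0 < x) (ha : 0 < a) : 2 ≤ x / a + a / x := by
  rw [div_add_div _ _ ha.ne' hx.ne', le_div_iff₀ (by positivity)]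
  nlinarith [sq_nonneg (x - a)]

lemma integral_pos_of_ae_pos [NeZero μ] {f : Ω → ℝ} (hf : ∀ᵐ ω ∂μ, 0 < f ω)
    (hfi : Integrable f μ) : 0 < ∫ ω, f ω ∂μ := by
  rw [integral_pos_iff_support_of_nonneg_ae (hf.mono fun _ h => h.le) hfi]
  refine pos_iff_ne_zero.2 fun h0 => ?_
  obtain ⟨ω, hpos, hzero⟩ := (hf.and ((Measure.measure_support_eq_zero_iff μ).1 h0)).exists
  exact hpos.ne' hzero

lemma one_le_integral_mul_integral_inv [IsProbabilityMeasure μ] {f : Ω → ℝ}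
    (hf : ∀ᵐ ω ∂μ, 0 < f ω) (hfi : Integrable f μ) (hfi' : Integrable (fun ω => (f ω)⁻¹) μ) :
    1 ≤ (∫ ω, f ω ∂μ) * ∫ ω, (f ω)⁻¹ ∂μ := by
  set a := ∫ ω, f ω ∂μ
  -- AM–GM: integrate `f / a + a / f ≥ 2`, where `∫ f / a = 1`.
  have ha : 0 < a := integral_pos_of_ae_pos hf hfi
  have hsum : 2 ≤ ∫ ω, (f ω / a + a * (f ω)⁻¹) ∂μ := by
    have := integral_mono_ae (integrable_const (2 : ℝ))
      ((hfi.div_const a).add (hfi'.const_mul a))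
      (hf.mono fun ω hω => by simpa [div_eq_mul_inv] using two_le_div_add_div hω ha)
    simpa using this
  rw [integral_add (hfi.div_const a) (hfi'.const_mul a), integral_div, integral_const_mul,
    div_self ha.ne'] at hsum
  linarith

lemma div_le_one_div_sub_one {u v : ℝ} (hu : 0 < u) (huv : u + v ≤ 1) : v / u ≤ 1 / u - 1 := by
  rw [div_sub_one hu.ne']
  gcongr
  linarith

lemma aemeasurable_of_integrable_one_div {f : Ω → ℝ}
    (h : Integrable (fun ω => 1 / f ω) μ) : AEMeasurable f μ := by
  simpa only [Function.comp_def, one_div, inv_inv] using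
    measurable_inv.comp_aemeasurable h.aemeasurable

section AddLeOne

variable {U V : Ω → ℝ} (hU : ∀ᵐ ω ∂μ, 0 < U ω) (hV : ∀ᵐ ω ∂μ, 0 < V ω)
  (hUV : ∀ᵐ ω ∂μ, U ω + V ω ≤ 1) (hUint : Integrable (fun ω => 1 / U ω) μ)
  (hVint : Integrable (fun ω => 1 / V ω) μ)
include hU hV hUV hUint hVint

lemma integrable_div_of_add_le_one [IsFiniteMeasure μ] : Integrable (fun ω => V ω / U ω) μ := by
  refine (hUint.sub (integrable_const 1)).mono'
    ((aemeasurable_of_integrable_one_div hVint).div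
      (aemeasurable_of_integrable_one_div hUint)).aestronglyMeasurable ?_
  filter_upwards [hU, hV, hUV] with ω hu hv huv
  rw [Real.norm_of_nonneg (div_nonneg hv.le hu.le)]
  exact div_le_one_div_sub_one hu huv

lemma integral_div_le_integral_one_div_sub_one [IsFiniteMeasure μ] :
    ∫ ω, V ω / U ω ∂μ ≤ ∫ ω, (1 / U ω - 1) ∂μ :=
  integral_mono_ae (integrable_div_of_add_le_one hU hV hUV hUint hVint)
    (hUint.sub (integrable_const 1))
    (by filter_upwards [hU, hUV] with ω hu huv using div_le_one_div_sub_one hu huv)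

end AddLeOne

end

/-- if 0 < U, 0 < V and U + V ≤ 1 almost surely, with 1/U and 1/V
integrable, then E[1/U − 1] · E[1/V − 1] ≥ 1. -/
theorem stmt_12
    {Ω : Type*} [MeasurableSpace Ω] (P : Measure Ω) [IsProbabilityMeasure P]
    (U V : Ω → ℝ)
    (hU : ∀ᵐ ω ∂P, 0 < U ω) (hV : ∀ᵐ ω ∂P, 0 < V ω)
    (hUV : ∀ᵐ ω ∂P, U ω + V ω ≤ 1)
    (hUint : Integrable (fun ω => 1 / U ω) P)
    (hVint : Integrable (fun ω => 1 / V ω) P) :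
    (∫ ω, (1 / U ω - 1) ∂P) * (∫ ω, (1 / V ω - 1) ∂P) ≥ 1 := by
  have hVU : ∀ᵐ ω ∂P, V ω + U ω ≤ 1 := hUV.mono fun _ h => by linarith
  have hcs := one_le_integral_mul_integral_inv (f := fun ω => V ω / U ω)
    (by filter_upwards [hU, hV] with ω hu hv using div_pos hv hu)
    (integrable_div_of_add_le_one hU hV hUV hUint hVint)
    (by simpa only [inv_div] using integrable_div_of_add_le_one hV hU hVU hVint hUint)
  simp only [inv_div] at hcs
  have hVU_nonneg : 0 ≤ ∫ ω, V ω / U ω ∂P :=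
    integral_nonneg_of_ae (by filter_upwards [hU, hV] with ω hu hv using (div_pos hv hu).le)
  have hUV_nonneg : 0 ≤ ∫ ω, U ω / V ω ∂P :=
    integral_nonneg_of_ae (by filter_upwards [hU, hV] with ω hu hv using (div_pos hu hv).le)
  have hUle := integral_div_le_integral_one_div_sub_one hU hV hUV hUint hVint
  calc 1 ≤ (∫ ω, V ω / U ω ∂P) * ∫ ω, U ω / V ω ∂P := hcs
    _ ≤ _ := mul_le_mul hUle (integral_div_le_integral_one_div_sub_one hV hU hVU hVint hUint)
      hUV_nonneg (hVU_nonneg.trans hUle)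
end

section
/- (Corollary 5.) Under Assumption 1 and the stratification setup, take the working models to be X = S with μ_jk(S) = E_jk(Y^(j) | S) and μ_kj(S) = E_jk(Y^(k) | S). Then Σ_ps = Σ_saipw, i.e., the 2×2 matrix diag( E_jk[Var_jk(Y^(j)|S)/π_j(S)], E_jk[Var_jk(Y^(k)|S)/π_k(S)] ) + Γ_jk equals diag( E_jk[(ε_jk−δ_jk)²/π_j(S)], E_jk[(ε_kj−δ_kj)²/π_k(S)] ) + Λ_jk, where ε_jk = Y^(j) − μ_jk(S), ε_kj = Y^(k) − μ_kj(S), δ_jk = E_jk[ε_jk] = 0, δ_kj = E_jk[ε_kj] = 0, Γ_jk is the ECE-conditional covariance matrix of (E_jk(Y^(j)|S), E_jk(Y^(k)|S)), and Λ_jk has diagonal entries λ_jk = Var_jk(Y^(j)) − Var_jk(ε_jk), λ_kj = Var_jk(Y^(k)) − Var_jk(ε_kj) and off-diagonal entries c_jk = Cov_jk(Y^(j),Y^(k)) − Cov_jk(ε_jk, ε_kj). -/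
/-!
Every quantity in the statement is a moment under the probability measure `Q = P[|ECE]`.
Since `S` takes finitely many values, `Q` is the mixture of its conditionings on the fibres
of `S`, on each of which `condMeanOn Q S f` is constant. Hence the residual `f - E_Q(f | S)`
has mean zero on every fibre, so it is orthogonal to every function of `S`: this gives
`δ = 0` and the law of total covariance, which turns `Λ` into `Γ`. As `π_j`, `π_k` are
functions of `S`, the diagonal terms agree fibre by fibre, where
`Var(f | S = s) = E[(f - E(f | S))² | S = s]`.
-/

open MeasureTheory ProbabilityTheory Filter Set

noncomputable section

/-- The conditional mean `E_μ(f | S)` of `f` given a finitely-valued variable `S`,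
as a function on the sample space. -/
def condMeanOn {Ω 𝓢 : Type*} [MeasurableSpace Ω] (μ : Measure Ω) (S : Ω → 𝓢) (f : Ω → ℝ) :
    Ω → ℝ :=
  fun ω => ∫ x, f x ∂μ[|{ω' | S ω' = S ω}]

/-- The conditional variance `Var_μ(f | S)` of `f` given `S`, as a function on the
sample space. -/
def condVarOn {Ω 𝓢 : Type*} [MeasurableSpace Ω] (μ : Measure Ω) (S : Ω → 𝓢) (f : Ω → ℝ) :
    Ω → ℝ :=
  fun ω => ProbabilityTheory.variance f μ[|{ω' | S ω' = S ω}]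

/-- The conditional covariance `Cov_μ(f, g | S)` of `f` and `g` given `S`, as a function on
the sample space. -/
def condCovOn {Ω 𝓢 : Type*} [MeasurableSpace Ω] (μ : Measure Ω) (S : Ω → 𝓢) (f g : Ω → ℝ) :
    Ω → ℝ :=
  fun ω => cov μ[|{ω' | S ω' = S ω}] f g

namespace Stratified

variable {Ω 𝓢 : Type*} [MeasurableSpace Ω] {μ : Measure Ω} {f g : Ω → ℝ} {p : ENNReal}

lemma _root_.MeasureTheory.MemLp.cond_s16 {s : Set Ω} (hf : MemLp f p μ) (hs : μ s ≠ 0) :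
    MemLp f p μ[|s] :=
  (hf.restrict s).smul_measure (ENNReal.inv_ne_top.2 hs)

lemma cov_eq_covariance (μ : Measure Ω) (f g : Ω → ℝ) : cov μ f g = cov[f, g; μ] := rfl

variable [MeasurableSpace 𝓢] [MeasurableSingletonClass 𝓢] {S : Ω → 𝓢}

lemma comp_ae_eq_cond_fiber (φ : 𝓢 → ℝ) (hS : Measurable S) (s : 𝓢) :
    (fun ω => φ (S ω)) =ᵐ[μ[|S ← s]] fun _ => φ s := by
  filter_upwards [ae_cond_mem (hS (measurableSet_singleton s))] with ω hω
  rw [Set.mem_preimage, Set.mem_singleton_iff] at hω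
  rw [hω]

lemma condMeanOn_ae_eq_cond_fiber (f : Ω → ℝ) (hS : Measurable S) (s : 𝓢) :
    condMeanOn μ S f =ᵐ[μ[|S ← s]] fun _ => ∫ x, f x ∂μ[|S ← s] :=
  comp_ae_eq_cond_fiber (fun t => ∫ x, f x ∂μ[|S ← t]) hS s

variable [Finite 𝓢]

lemma memLp_comp_of_finite [IsFiniteMeasure μ] (hS : Measurable S) (φ : 𝓢 → ℝ) :
    MemLp (fun ω => φ (S ω)) p μ :=
  (MemLp.of_discrete (μ := μ.map S)).comp_of_map hS.aemeasurable

lemma memLp_condMeanOn [IsFiniteMeasure μ] (hS : Measurable S) (f : Ω → ℝ) :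
    MemLp (condMeanOn μ S f) p μ :=
  memLp_comp_of_finite hS fun s => ∫ x, f x ∂μ[|S ← s]

lemma memLp_sub_condMeanOn [IsFiniteMeasure μ] (hS : Measurable S) (hf : MemLp f p μ) :
    MemLp (fun ω => f ω - condMeanOn μ S f ω) p μ :=
  hf.sub (memLp_condMeanOn hS f)

lemma integral_eq_of_integral_cond_fiber_eq [IsFiniteMeasure μ] (hS : Measurable S)
    {F G : Ω → ℝ} (hF : Integrable F μ) (hG : Integrable G μ)
    (h : ∀ s, μ (S ⁻¹' {s}) ≠ 0 → ∫ ω, F ω ∂μ[|S ← s] = ∫ ω, G ω ∂μ[|S ← s]) :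
    ∫ ω, F ω ∂μ = ∫ ω, G ω ∂μ := by
  have := Fintype.ofFinite 𝓢
  rw [← sum_meas_smul_cond_fiber hS μ] at hF hG ⊢
  rw [integral_finsetSum_measure (integrable_finsetSum_measure.1 hF),
    integral_finsetSum_measure (integrable_finsetSum_measure.1 hG)]
  refine Finset.sum_congr rfl fun s _ => ?_
  by_cases hs : μ (S ⁻¹' {s}) = 0
  · simp [hs]
  · rw [integral_smul_measure, integral_smul_measure, h s hs]

lemma integral_comp_mul_sub_condMeanOn [IsFiniteMeasure μ] (hS : Measurable S) (φ : 𝓢 → ℝ)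
    (hf : MemLp f 2 μ) :
    ∫ ω, φ (S ω) * (f ω - condMeanOn μ S f ω) ∂μ = 0 := by
  have hF : Integrable (fun ω => φ (S ω) * (f ω - condMeanOn μ S f ω)) μ :=
    (memLp_comp_of_finite (p := 2) hS φ).integrable_mul (memLp_sub_condMeanOn hS hf)
  rw [← integral_zero Ω ℝ (μ := μ)]
  refine integral_eq_of_integral_cond_fiber_eq hS hF (integrable_zero _ _ _) fun s hs => ?_
  have := cond_isProbabilityMeasure hs
  have hfs : Integrable f μ[|S ← s] := (hf.cond_s16 hs).integrable one_le_two
  calc ∫ ω, φ (S ω) * (f ω - condMeanOn μ S f ω) ∂μ[|S ← s]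
      = ∫ ω, φ s * (f ω - ∫ x, f x ∂μ[|S ← s]) ∂μ[|S ← s] := by
        refine integral_congr_ae ?_
        filter_upwards [comp_ae_eq_cond_fiber φ hS s, condMeanOn_ae_eq_cond_fiber f hS s]
          with ω hφ hm
        rw [hφ, hm]
    _ = 0 := by simp [integral_const_mul, integral_sub hfs (integrable_const _)]
    _ = ∫ _, 0 ∂μ[|S ← s] := integral_zero _ _ |>.symm

lemma integral_sub_condMeanOn [IsFiniteMeasure μ] (hS : Measurable S) (hf : MemLp f 2 μ) :
    ∫ ω, f ω - condMeanOn μ S f ω ∂μ = 0 := by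
  simpa using integral_comp_mul_sub_condMeanOn hS (fun _ => 1) hf

lemma covariance_condMeanOn_sub_condMeanOn [IsProbabilityMeasure μ] (hS : Measurable S)
    (g : Ω → ℝ) (hf : MemLp f 2 μ) :
    cov[condMeanOn μ S g, fun ω => f ω - condMeanOn μ S f ω; μ] = 0 := by
  rw [covariance_eq_sub (memLp_condMeanOn hS g) (memLp_sub_condMeanOn hS hf)]
  have horth : ∫ ω, condMeanOn μ S g ω * (f ω - condMeanOn μ S f ω) ∂μ = 0 :=
    integral_comp_mul_sub_condMeanOn hS (fun t => ∫ x, g x ∂μ[|S ← t]) hf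
  simp only [Pi.mul_apply]
  rw [horth, integral_sub_condMeanOn hS hf, mul_zero, sub_zero]

lemma covariance_eq_covariance_condMeanOn_add [IsProbabilityMeasure μ] (hS : Measurable S)
    (hf : MemLp f 2 μ) (hg : MemLp g 2 μ) :
    cov[f, g; μ] = cov[condMeanOn μ S f, condMeanOn μ S g; μ]
      + cov[fun ω => f ω - condMeanOn μ S f ω, fun ω => g ω - condMeanOn μ S g ω; μ] := by
  have hsplit : ∀ h : Ω → ℝ, h = condMeanOn μ S h + fun ω => h ω - condMeanOn μ S h ω :=
    fun h => funext fun ω => by simp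
  conv_lhs => rw [hsplit f, hsplit g]
  rw [covariance_add_left (memLp_condMeanOn hS f) (memLp_sub_condMeanOn hS hf)
      ((memLp_condMeanOn hS g).add (memLp_sub_condMeanOn hS hg)),
    covariance_add_right (memLp_condMeanOn hS f) (memLp_condMeanOn hS g)
      (memLp_sub_condMeanOn hS hg),
    covariance_add_right (memLp_sub_condMeanOn hS hf) (memLp_condMeanOn hS g)
      (memLp_sub_condMeanOn hS hg),
    covariance_comm (fun ω => f ω - condMeanOn μ S f ω),
    covariance_condMeanOn_sub_condMeanOn hS _ hf, covariance_condMeanOn_sub_condMeanOn hS _ hg]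
  ring

lemma variance_eq_variance_condMeanOn_add [IsProbabilityMeasure μ] (hS : Measurable S)
    (hf : MemLp f 2 μ) :
    Var[f; μ] = Var[condMeanOn μ S f; μ] + Var[fun ω => f ω - condMeanOn μ S f ω; μ] := by
  rw [← covariance_self hf.aemeasurable,
    ← covariance_self (memLp_condMeanOn (p := 2) hS f).aemeasurable,
    ← covariance_self (memLp_sub_condMeanOn hS hf).aemeasurable]
  exact covariance_eq_covariance_condMeanOn_add hS hf hf

lemma integral_condVarOn_div [IsFiniteMeasure μ] (hS : Measurable S) (hf : MemLp f 2 μ)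
    {w : Ω → ℝ} (hw : ∀ ω ω', S ω = S ω' → w ω = w ω') :
    ∫ ω, condVarOn μ S f ω / w ω ∂μ = ∫ ω, (f ω - condMeanOn μ S f ω) ^ 2 / w ω ∂μ := by
  set ρ := Function.extend S w 0
  have hρ : ∀ ω, w ω = ρ (S ω) := fun ω =>
    (Function.FactorsThrough.extend_apply (f := S) (fun a b h => hw a b h) 0 ω).symm
  simp only [hρ]
  refine integral_eq_of_integral_cond_fiber_eq hS ?_ ?_ fun s hs => ?_
  · exact (memLp_comp_of_finite (p := 1) hS fun t => variance f μ[|S ← t] / ρ t).integrable le_rfl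
  · simp only [div_eq_mul_inv]
    exact (memLp_sub_condMeanOn hS hf).integrable_sq.mul_of_top_left
      (memLp_comp_of_finite (p := ⊤) hS fun t => (ρ t)⁻¹)
  have := cond_isProbabilityMeasure hs
  calc ∫ ω, condVarOn μ S f ω / ρ (S ω) ∂μ[|S ← s]
      = ∫ _, variance f μ[|S ← s] / ρ s ∂μ[|S ← s] :=
        integral_congr_ae (comp_ae_eq_cond_fiber (fun t => variance f μ[|S ← t] / ρ t) hS s)
    _ = (∫ ω, (f ω - ∫ x, f x ∂μ[|S ← s]) ^ 2 ∂μ[|S ← s]) / ρ s := by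
        rw [integral_const, probReal_univ, one_smul,
          variance_eq_integral (hf.cond_s16 hs).aemeasurable]
    _ = ∫ ω, (f ω - condMeanOn μ S f ω) ^ 2 / ρ (S ω) ∂μ[|S ← s] := by
        rw [← integral_div]
        refine integral_congr_ae ?_
        filter_upwards [comp_ae_eq_cond_fiber ρ hS s, condMeanOn_ae_eq_cond_fiber f hS s]
          with ω hρs hm
        rw [hρs, hm]

end Stratified

open Stratified

theorem stmt_16_general
    {Ω 𝓩 : Type*} [MeasurableSpace Ω] [MeasurableSpace 𝓩]
    (P : Measure Ω) [IsProbabilityMeasure P]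
    {J : ℕ} (Z : Ω → 𝓩) (Y : Fin J → Ω → ℝ)
    (hZ : Measurable Z) (hY2 : ∀ m, MemLp (Y m) 2 P)
    (π : Fin J → 𝓩 → ℝ)
    (j k : Fin J)
    -- the ECE event, with positive probability
    (ECE : Set Ω) (hECEpos : P ECE ≠ 0)
    -- stratification: S is a function of Z with finitely many values, and π_j(Z), π_k(Z)
    -- are constant on every level of S
    {𝓢 : Type*} [Fintype 𝓢] [MeasurableSpace 𝓢] [MeasurableSingletonClass 𝓢]
    (S : Ω → 𝓢) (hSZ : ∃ g : 𝓩 → 𝓢, Measurable g ∧ ∀ ω, S ω = g (Z ω))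
    (hconstj : ∀ ω ω', S ω = S ω' → π j (Z ω) = π j (Z ω'))
    (hconstk : ∀ ω ω', S ω = S ω' → π k (Z ω) = π k (Z ω'))
    -- working models: X = S with μ_jk(S) = E_jk(Y^(j)|S), μ_kj(S) = E_jk(Y^(k)|S);
    -- the corresponding residuals and δ's
    (εjk εkj : Ω → ℝ)
    (hεjk : ∀ ω, εjk ω = Y j ω - condMeanOn P[|ECE] S (Y j) ω)
    (hεkj : ∀ ω, εkj ω = Y k ω - condMeanOn P[|ECE] S (Y k) ω)
    (δjk δkj : ℝ)
    (hδjk : δjk = ∫ ω, εjk ω ∂P[|ECE]) (hδkj : δkj = ∫ ω, εkj ω ∂P[|ECE])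
    (lamjk lamkj : ℝ)
    (hlamjk : lamjk = variance (Y j) P[|ECE] - variance εjk P[|ECE])
    (hlamkj : lamkj = variance (Y k) P[|ECE] - variance εkj P[|ECE])
    (cjk : ℝ) (hcjk : cjk = cov P[|ECE] (Y j) (Y k) - cov P[|ECE] εjk εkj)
    -- the matrices
    (Γjk Sps Ssaipw : Matrix (Fin 2) (Fin 2) ℝ)
    (hΓjk : Γjk =
      !![variance (condMeanOn P[|ECE] S (Y j)) P[|ECE],
           cov P[|ECE] (condMeanOn P[|ECE] S (Y j)) (condMeanOn P[|ECE] S (Y k));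
         cov P[|ECE] (condMeanOn P[|ECE] S (Y j)) (condMeanOn P[|ECE] S (Y k)),
           variance (condMeanOn P[|ECE] S (Y k)) P[|ECE]])
    (hSps : Sps =
      !![∫ ω, condVarOn P[|ECE] S (Y j) ω / π j (Z ω) ∂P[|ECE], 0;
         0, ∫ ω, condVarOn P[|ECE] S (Y k) ω / π k (Z ω) ∂P[|ECE]]
      + Γjk)
    (hSsaipw : Ssaipw =
      !![∫ ω, (εjk ω - δjk) ^ 2 / π j (Z ω) ∂P[|ECE], 0;
         0, ∫ ω, (εkj ω - δkj) ^ 2 / π k (Z ω) ∂P[|ECE]]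
      + !![lamjk, cjk; cjk, lamkj]) :
    δjk = 0 ∧ δkj = 0 ∧ Sps = Ssaipw := by
  obtain ⟨g, hg, hSg⟩ := hSZ
  have hS : Measurable S := (funext hSg : S = g ∘ Z) ▸ hg.comp hZ
  have := cond_isProbabilityMeasure hECEpos
  have hYQ : ∀ m, MemLp (Y m) 2 P[|ECE] := fun m => (hY2 m).cond_s16 hECEpos
  obtain rfl : εjk = _ := funext hεjk
  obtain rfl : εkj = _ := funext hεkj
  obtain rfl : δjk = 0 := hδjk.trans (integral_sub_condMeanOn hS (hYQ j))
  obtain rfl : δkj = 0 := hδkj.trans (integral_sub_condMeanOn hS (hYQ k))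
  refine ⟨rfl, rfl, ?_⟩
  rw [hSps, hSsaipw, hΓjk, hlamjk, hlamkj, hcjk,
    integral_condVarOn_div hS (hYQ j) (w := fun ω => π j (Z ω)) hconstj,
    integral_condVarOn_div hS (hYQ k) (w := fun ω => π k (Z ω)) hconstk,
    variance_eq_variance_condMeanOn_add hS (hYQ j), variance_eq_variance_condMeanOn_add hS (hYQ k),
    cov_eq_covariance, cov_eq_covariance, cov_eq_covariance,
    covariance_eq_covariance_condMeanOn_add hS (hYQ j) (hYQ k)]
  simp only [sub_zero, add_sub_cancel_right]

/-- Corollary 5: with working models μ_jk(S) = E_jk(Y^(j)|S) and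
μ_kj(S) = E_jk(Y^(k)|S), the PS and SAIPW asymptotic covariance matrices coincide. -/
theorem stmt_16
    {Ω 𝓩 𝓦 : Type*} [MeasurableSpace Ω] [StandardBorelSpace Ω]
    [MeasurableSpace 𝓩] [MeasurableSpace 𝓦]
    (P : Measure Ω) [IsProbabilityMeasure P]
    {J : ℕ} (Z : Ω → 𝓩) (W : Ω → 𝓦) (A : Ω → Fin J) (Y : Fin J → Ω → ℝ)
    (hZ : Measurable Z) (hW : Measurable W) (hA : Measurable A)
    (hY : ∀ m, Measurable (Y m)) (hY2 : ∀ m, MemLp (Y m) 2 P)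
    (π : Fin J → 𝓩 → ℝ) (hπmeas : ∀ m, Measurable (π m))
    (hπ01 : ∀ m z, π m z ∈ Set.Icc (0:ℝ) 1)
    (hπsum : ∀ z, ∑ m, π m z = 1)
    -- Assumption 1: A ⟂ (W, Y^(1),…,Y^(J)) given Z
    (hCI : CondIndepFun (MeasurableSpace.comap Z inferInstance) hZ.comap_le A
        (fun ω => (W ω, fun m => Y m ω)) P)
    -- Assumption 1: P(A = m | Z) = π_m(Z) a.s.
    (hprop : ∀ m : Fin J,
      (P[ Set.indicator {ω' | A ω' = m} (fun _ => (1:ℝ)) | MeasurableSpace.comap Z inferInstance])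
        =ᵐ[P] fun ω => π m (Z ω))
    (j k : Fin J) (hjk : j ≠ k)
    -- the ECE event, with positive probability
    (ECE : Set Ω) (hECE : ECE = {ω | 0 < π j (Z ω) ∧ 0 < π k (Z ω)})
    (hECEpos : P ECE ≠ 0)
    -- stratification: S is a function of Z with finitely many values, and π_j(Z), π_k(Z)
    -- are constant on every level of S
    {𝓢 : Type*} [Fintype 𝓢] [MeasurableSpace 𝓢] [MeasurableSingletonClass 𝓢]
    (S : Ω → 𝓢) (hSZ : ∃ g : 𝓩 → 𝓢, Measurable g ∧ ∀ ω, S ω = g (Z ω))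
    (hconstj : ∀ ω ω', S ω = S ω' → π j (Z ω) = π j (Z ω'))
    (hconstk : ∀ ω ω', S ω = S ω' → π k (Z ω) = π k (Z ω'))
    -- working models: X = S with μ_jk(S) = E_jk(Y^(j)|S), μ_kj(S) = E_jk(Y^(k)|S);
    -- the corresponding residuals and δ's
    (εjk εkj : Ω → ℝ)
    (hεjk : ∀ ω, εjk ω = Y j ω - condMeanOn P[|ECE] S (Y j) ω)
    (hεkj : ∀ ω, εkj ω = Y k ω - condMeanOn P[|ECE] S (Y k) ω)
    (δjk δkj : ℝ)
    (hδjk : δjk = ∫ ω, εjk ω ∂P[|ECE]) (hδkj : δkj = ∫ ω, εkj ω ∂P[|ECE])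
    (lamjk lamkj : ℝ)
    (hlamjk : lamjk = variance (Y j) P[|ECE] - variance εjk P[|ECE])
    (hlamkj : lamkj = variance (Y k) P[|ECE] - variance εkj P[|ECE])
    (cjk : ℝ) (hcjk : cjk = cov P[|ECE] (Y j) (Y k) - cov P[|ECE] εjk εkj)
    -- finiteness of the displayed conditional moments
    (hIntjε : Integrable (fun ω => (εjk ω - δjk) ^ 2 / π j (Z ω)) P[|ECE])
    (hIntkε : Integrable (fun ω => (εkj ω - δkj) ^ 2 / π k (Z ω)) P[|ECE])
    -- the matrices
    (Γjk Sps Ssaipw : Matrix (Fin 2) (Fin 2) ℝ)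
    (hΓjk : Γjk =
      !![variance (condMeanOn P[|ECE] S (Y j)) P[|ECE],
           cov P[|ECE] (condMeanOn P[|ECE] S (Y j)) (condMeanOn P[|ECE] S (Y k));
         cov P[|ECE] (condMeanOn P[|ECE] S (Y j)) (condMeanOn P[|ECE] S (Y k)),
           variance (condMeanOn P[|ECE] S (Y k)) P[|ECE]])
    (hSps : Sps =
      !![∫ ω, condVarOn P[|ECE] S (Y j) ω / π j (Z ω) ∂P[|ECE], 0;
         0, ∫ ω, condVarOn P[|ECE] S (Y k) ω / π k (Z ω) ∂P[|ECE]]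
      + Γjk)
    (hSsaipw : Ssaipw =
      !![∫ ω, (εjk ω - δjk) ^ 2 / π j (Z ω) ∂P[|ECE], 0;
         0, ∫ ω, (εkj ω - δkj) ^ 2 / π k (Z ω) ∂P[|ECE]]
      + !![lamjk, cjk; cjk, lamkj]) :
    δjk = 0 ∧ δkj = 0 ∧ Sps = Ssaipw :=
  stmt_16_general P Z Y hZ hY2 π j k ECE hECEpos S hSZ hconstj hconstk εjk εkj hεjk hεkj δjk δkj
    hδjk hδkj lamjk lamkj hlamjk hlamkj cjk hcjk Γjk Sps Ssaipw hΓjk hSps hSsaipw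
end
end
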